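/- arXiv:2510.17578 — 7 statements merged into one kernel-verified Lean document; each statement's English description precedes it below -/
import Mathlib

section
/- Let N and K_B be positive integers and let B_1, …, B_{K_B} be real N×N matrices. Then there exist an integer K_A with K_A ≤ K_B and real N×N matrices A_1, …, A_{K_A} that are pairwise orthogonal in the Frobenius inner product (i.e., trace(A_jᵀ A_ℓ) = 0 for all j ≠ ℓ) such that for every real N×N matrix M, ∑_{k=1}^{K_B} B_k M B_kᵀ = ∑_{k=1}^{K_A} A_k M A_kᵀ. -/
open Matrix Finset

/-!
Mixing the family by an orthogonal matrix `O`, `Aₖ = ∑ₗ Oₖₗ Bₗ`, leaves `∑ₖ Aₖ M Aₖᵀ` unchanged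
because `Oᵀ O = 1`, and conjugates the Frobenius Gram matrix `Gⱼₗ = trace (Bⱼᵀ Bₗ)` into `O G Oᵀ`.
Since `G` is real symmetric, the spectral theorem supplies an `O` making `O G Oᵀ` diagonal, i.e.
the `Aₖ` pairwise Frobenius-orthogonal.
-/

namespace Matrix

variable {ι m n R : Type*} [Fintype n] [CommRing R]

def frobeniusGram [Fintype m] (B : ι → Matrix m n R) : Matrix ι ι R :=
  of fun j l => trace ((B j)ᵀ * B l)

theorem frobeniusGram_isSymm [Fintype m] (B : ι → Matrix m n R) : (frobeniusGram B).IsSymm := by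
  ext j l
  simp only [frobeniusGram, transpose_apply, of_apply]
  rw [← trace_transpose, transpose_mul, transpose_transpose]

variable [Fintype ι]

theorem frobeniusGram_mix [Fintype m] (O : Matrix ι ι R) (B : ι → Matrix m n R) :
    frobeniusGram (fun k => ∑ l, O k l • B l) = O * frobeniusGram B * Oᵀ := by
  ext j l
  simp only [frobeniusGram, of_apply, mul_apply, transpose_apply, transpose_sum,
    transpose_smul, Matrix.sum_mul, Matrix.mul_sum, Matrix.smul_mul, Matrix.mul_smul, trace_sum,
    trace_smul, smul_eq_mul, Finset.sum_mul, Finset.mul_sum]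
  exact sum_congr rfl fun _ _ => sum_congr rfl fun _ _ => by ring

theorem sum_mix_mul_mul_transpose (O : Matrix ι ι R) (B : ι → Matrix m n R) (M : Matrix n n R) :
    ∑ k, (∑ l, O k l • B l) * M * (∑ l, O k l • B l)ᵀ =
      ∑ l, ∑ l', (Oᵀ * O) l l' • (B l * M * (B l')ᵀ) := by
  simp only [mul_apply, transpose_apply, transpose_sum, transpose_smul, Matrix.sum_mul,
    Matrix.mul_sum, Matrix.smul_mul, Matrix.mul_smul, smul_smul, Finset.sum_smul, Finset.smul_sum]
  rw [Finset.sum_comm]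
  refine (sum_congr rfl fun _ _ => Finset.sum_comm).trans ?_
  rw [Finset.sum_comm]
  exact sum_congr rfl fun _ _ => sum_congr rfl fun _ _ => sum_congr rfl fun _ _ => by
    rw [mul_comm]

theorem sum_mix_mul_mul_transpose_of_transpose_mul_self [DecidableEq ι] {O : Matrix ι ι R}
    (hO : Oᵀ * O = 1) (B : ι → Matrix m n R) (M : Matrix n n R) :
    ∑ k, (∑ l, O k l • B l) * M * (∑ l, O k l • B l)ᵀ = ∑ k, B k * M * (B k)ᵀ := by
  simp [sum_mix_mul_mul_transpose, hO, one_apply, ite_smul]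

theorem IsSymm.exists_transpose_mul_self_eq_one_isDiag [DecidableEq ι] {G : Matrix ι ι ℝ}
    (hG : G.IsSymm) : ∃ O : Matrix ι ι ℝ, Oᵀ * O = 1 ∧ (O * G * Oᵀ).IsDiag := by
  have hGh : G.IsHermitian := isHermitian_iff_isSymm.mpr hG
  set U := hGh.eigenvectorUnitary
  have hUT : (star (U : Matrix ι ι ℝ))ᵀ = U := by
    rw [star_eq_conjTranspose, conjTranspose_eq_transpose_of_trivial, transpose_transpose]
  refine ⟨star (U : Matrix ι ι ℝ), hUT ▸ U.2.2, ?_⟩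
  have hdiag := hGh.conjStarAlgAut_star_eigenvectorUnitary
  simp only [Unitary.conjStarAlgAut_apply, Unitary.coe_star, star_star] at hdiag
  rw [hUT, hdiag]
  exact isDiag_diagonal _

end Matrix

theorem bekk_orthogonalization_general (N K_B : ℕ)
    (B : Fin K_B → Matrix (Fin N) (Fin N) ℝ) :
    ∃ (K_A : ℕ) (A : Fin K_A → Matrix (Fin N) (Fin N) ℝ),
      K_A ≤ K_B ∧
      (∀ j ℓ : Fin K_A, j ≠ ℓ → Matrix.trace ((A j)ᵀ * A ℓ) = 0) ∧
      (∀ M : Matrix (Fin N) (Fin N) ℝ,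
        ∑ k, B k * M * (B k)ᵀ = ∑ k, A k * M * (A k)ᵀ) := by
  obtain ⟨O, hO, hdiag⟩ := (frobeniusGram_isSymm B).exists_transpose_mul_self_eq_one_isDiag
  refine ⟨K_B, fun k => ∑ l, O k l • B l, le_rfl, fun j ℓ hjℓ => ?_, fun M => ?_⟩
  · have hzero := hdiag hjℓ
    rwa [← frobeniusGram_mix] at hzero
  · exact (sum_mix_mul_mul_transpose_of_transpose_mul_self hO B M).symm

/-- Orthogonalization invariance of BEKK coefficient matrices: any finite family of
real `N × N` matrices `B₁, …, B_{K_B}` can be replaced by a family of at most `K_B`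
pairwise Frobenius-orthogonal matrices `A₁, …, A_{K_A}` inducing the same quadratic map
`M ↦ ∑ₖ Bₖ M Bₖᵀ`. -/
theorem bekk_orthogonalization (N K_B : ℕ) (hN : 0 < N) (hKB : 0 < K_B)
    (B : Fin K_B → Matrix (Fin N) (Fin N) ℝ) :
    ∃ (K_A : ℕ) (A : Fin K_A → Matrix (Fin N) (Fin N) ℝ),
      K_A ≤ K_B ∧
      (∀ j ℓ : Fin K_A, j ≠ ℓ → Matrix.trace ((A j)ᵀ * A ℓ) = 0) ∧
      (∀ M : Matrix (Fin N) (Fin N) ℝ,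
        ∑ k, B k * M * (B k)ᵀ = ∑ k, A k * M * (A k)ᵀ) :=
  bekk_orthogonalization_general N K_B B
end

section
/- Assume ‖∇L(Θ*)‖_{∞,∞} ≤ λ/2, and let Θ̂ be a global minimizer over ℝ^{m×d} of the objective Θ ↦ L(Θ) + λ‖Θ‖_{1,1}. Then for every column index 1 ≤ j ≤ d, the error vector Δ_j = Θ̂_{·,j} − Θ*_{·,j} satisfies the ℓ1-cone condition ∑_{i ∉ S_j} |Δ_j(i)| ≤ 3 ∑_{i ∈ S_j} |Δ_j(i)|. -/
open Matrix Finset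

/-!
Replacing the `j`-th column of `Θ̂` by that of `Θ*` leaves the other columns of the objective
unchanged, so the `j`-th column of `Θ̂` beats that of `Θ*` in the column-wise lasso problem.
Expanding the square around `Θ*` gives the basic inequality
`λ‖Θ̂ⱼ‖₁ ≤ λ‖Θ*ⱼ‖₁ - ⟨∇L(Θ*)ⱼ, Δⱼ⟩ ≤ λ‖Θ*ⱼ‖₁ + (λ/2)‖Δⱼ‖₁`, and splitting the ℓ1 norms
along the support `Sⱼ` (where `|Θ̂ᵢⱼ| = |Δⱼ(i)|` off `Sⱼ`) turns it into the cone condition.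
-/

theorem apply_le_of_forall_sum_le {ι α β : Type*} [Fintype ι] [DecidableEq ι]
    [AddCommMonoid β] [PartialOrder β] [IsOrderedCancelAddMonoid β]
    (φ : ι → α → β) (x : ι → α) (hx : ∀ y : ι → α, ∑ j, φ j (x j) ≤ ∑ j, φ j (y j))
    (j : ι) (v : α) : φ j (x j) ≤ φ j v := by
  have h := hx (Function.update x j v)
  have hrest : ∑ k ∈ univ.erase j, φ k (Function.update x j v k)
      = ∑ k ∈ univ.erase j, φ k (x k) :=
    sum_congr rfl fun k hk => by rw [Function.update_of_ne (ne_of_mem_erase hk)]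
  rw [← add_sum_erase _ _ (mem_univ j), ← add_sum_erase _ _ (mem_univ j),
    Function.update_self, hrest] at h
  exact le_of_add_le_add_right h

theorem abs_dotProduct_le_mul_sum_abs {ι : Type*} [Fintype ι] {g δ : ι → ℝ} {b : ℝ}
    (hg : ∀ i, |g i| ≤ b) : |g ⬝ᵥ δ| ≤ b * ∑ i, |δ i| :=
  calc |g ⬝ᵥ δ| ≤ ∑ i, |g i * δ i| := abs_sum_le_sum_abs _ _
    _ ≤ ∑ i, b * |δ i| := sum_le_sum fun i _ => by
        rw [abs_mul]; exact mul_le_mul_of_nonneg_right (hg i) (abs_nonneg _)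
    _ = b * ∑ i, |δ i| := (mul_sum _ _ _).symm

theorem sum_abs_sub_filter_eq_zero_le {ι : Type*} [Fintype ι] {a b : ι → ℝ}
    (h : ∑ i, |b i| ≤ ∑ i, |a i| + 1 / 2 * ∑ i, |b i - a i|) :
    ∑ i ∈ univ.filter (fun i => a i = 0), |b i - a i|
      ≤ 3 * ∑ i ∈ univ.filter (fun i => a i ≠ 0), |b i - a i| := by
  have hsplit (f : ι → ℝ) : ∑ i, f i
      = ∑ i ∈ univ.filter (fun i => a i ≠ 0), f i + ∑ i ∈ univ.filter (fun i => a i = 0), f i := by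
    rw [add_comm, sum_filter_add_sum_filter_not]
  have hb : ∑ i ∈ univ.filter (fun i => a i = 0), |b i|
      = ∑ i ∈ univ.filter (fun i => a i = 0), |b i - a i| :=
    sum_congr rfl fun i hi => by rw [(mem_filter.mp hi).2, sub_zero]
  have ha : ∑ i ∈ univ.filter (fun i => a i = 0), |a i| = 0 :=
    sum_eq_zero fun i hi => by rw [(mem_filter.mp hi).2, abs_zero]
  have htri : ∑ i ∈ univ.filter (fun i => a i ≠ 0), |a i|
      ≤ ∑ i ∈ univ.filter (fun i => a i ≠ 0), |b i|
        + ∑ i ∈ univ.filter (fun i => a i ≠ 0), |b i - a i| := by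
    rw [← sum_add_distrib]
    exact sum_le_sum fun i _ => by
      simpa using abs_sub (b i) (b i - a i)
  rw [hsplit fun i => |b i|, hsplit fun i => |a i|, hsplit fun i => |b i - a i|, hb, ha] at h
  linarith

section Lasso

variable {n p : Type*} [Fintype n] [Fintype p]

noncomputable def lassoObjective (X : Matrix n p ℝ) (y : n → ℝ) (lam : ℝ) (v : p → ℝ) : ℝ :=
  1 / (2 * (Fintype.card n : ℝ)) * ∑ t, (y t - (X *ᵥ v) t) ^ 2 + lam * ∑ i, |v i|

theorem sum_sq_sub_mulVec_add (X : Matrix n p ℝ) (y : n → ℝ) (a δ : p → ℝ) :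
    ∑ t, (y t - (X *ᵥ (a + δ)) t) ^ 2
      = ∑ t, (y t - (X *ᵥ a) t) ^ 2 + 2 * (Xᵀ *ᵥ (X *ᵥ a - y)) ⬝ᵥ δ
        + ∑ t, (X *ᵥ δ) t ^ 2 := by
  rw [mulVec_transpose, ← dotProduct_mulVec]
  simp only [dotProduct, mulVec_add, Pi.add_apply, Pi.sub_apply, mul_sum, ← sum_add_distrib]
  exact sum_congr rfl fun t _ => by ring

theorem sum_abs_le_of_lassoObjective_le {X : Matrix n p ℝ} {y : n → ℝ} {lam : ℝ}
    {a b : p → ℝ} (hlam : 0 < lam)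
    (hgrad : ∀ i, |((1 / (Fintype.card n : ℝ)) • (Xᵀ *ᵥ (X *ᵥ a - y))) i| ≤ lam / 2)
    (hle : lassoObjective X y lam b ≤ lassoObjective X y lam a) :
    ∑ i, |b i| ≤ ∑ i, |a i| + 1 / 2 * ∑ i, |b i - a i| := by
  set c : ℝ := 1 / (2 * (Fintype.card n : ℝ))
  set g := (1 / (Fintype.card n : ℝ)) • (Xᵀ *ᵥ (X *ᵥ a - y))
  have hexp := sum_sq_sub_mulVec_add X y a (b - a)
  rw [add_sub_cancel] at hexp
  have hcross : c * (2 * (Xᵀ *ᵥ (X *ᵥ a - y)) ⬝ᵥ (b - a)) = g ⬝ᵥ (b - a) := by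
    rw [smul_dotProduct, smul_eq_mul]; ring
  have hgδ := abs_le.mp (abs_dotProduct_le_mul_sum_abs (δ := b - a) hgrad)
  have hquad : 0 ≤ c * ∑ t, (X *ᵥ (b - a)) t ^ 2 := by positivity
  unfold lassoObjective at hle
  rw [hexp, mul_add, mul_add, hcross] at hle
  simp only [Pi.sub_apply] at hgδ hle
  refine le_of_mul_le_mul_left ?_ hlam
  linarith

theorem sum_lassoObjective_transpose {q : Type*} [Fintype q] (X : Matrix n p ℝ)
    (Y : Matrix n q ℝ) (lam : ℝ) (Θ : Matrix p q ℝ) :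
    ∑ j, lassoObjective X (Yᵀ j) lam (Θᵀ j)
      = 1 / (2 * (Fintype.card n : ℝ)) * ∑ t, ∑ j, (Y t j - (X * Θ) t j) ^ 2
        + lam * ∑ i, ∑ j, |Θ i j| := by
  simp only [lassoObjective, sum_add_distrib, ← mul_sum, mul_apply', transpose_apply]
  rw [sum_comm (f := fun t j => _), sum_comm (f := fun i j => |Θ i j|)]
  rfl

end Lasso

theorem ell1_cone_general (T m d : ℕ)
    (Y : Matrix (Fin T) (Fin d) ℝ) (X : Matrix (Fin T) (Fin m) ℝ)
    (lam : ℝ) (hlam : 0 < lam)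
    (Θstar Θhat : Matrix (Fin m) (Fin d) ℝ)
    (hgrad : ∀ (i : Fin m) (j : Fin d),
      |((1 / (T : ℝ)) • (Xᵀ * (X * Θstar - Y))) i j| ≤ lam / 2)
    (hmin : ∀ Θ : Matrix (Fin m) (Fin d) ℝ,
      (1 / (2 * (T : ℝ))) * (∑ t, ∑ j, (Y t j - (X * Θhat) t j) ^ 2)
          + lam * ∑ i, ∑ j, |Θhat i j|
        ≤ (1 / (2 * (T : ℝ))) * (∑ t, ∑ j, (Y t j - (X * Θ) t j) ^ 2)
          + lam * ∑ i, ∑ j, |Θ i j|) :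
    ∀ j : Fin d,
      ∑ i ∈ Finset.univ.filter (fun i : Fin m => Θstar i j = 0), |Θhat i j - Θstar i j|
        ≤ 3 * ∑ i ∈ Finset.univ.filter (fun i : Fin m => Θstar i j ≠ 0),
            |Θhat i j - Θstar i j| := by
  intro j
  have hcol : lassoObjective X (Yᵀ j) lam (Θhatᵀ j)
      ≤ lassoObjective X (Yᵀ j) lam (Θstarᵀ j) := by
    refine apply_le_of_forall_sum_le (fun j v => lassoObjective X (Yᵀ j) lam v) Θhatᵀ
      (fun Θ => ?_) j _
    change _ ≤ ∑ j, lassoObjective X (Yᵀ j) lam ((of Θ)ᵀᵀ j)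
    rw [sum_lassoObjective_transpose, sum_lassoObjective_transpose, Fintype.card_fin]
    exact hmin _
  refine sum_abs_sub_filter_eq_zero_le (sum_abs_le_of_lassoObjective_le hlam (fun i => ?_) hcol)
  simpa [mul_apply', mulVec, dotProduct] using hgrad i j

/-- ℓ1-cone condition: if `‖∇L(Θ*)‖_{∞,∞} ≤ λ/2` and `Θ̂` is a global minimizer of the
lasso-type objective `Θ ↦ L(Θ) + λ‖Θ‖_{1,1}` with `L(Θ) = (1/(2T))‖Y − XΘ‖_F²`, then for
every column `j` the error `Δⱼ = Θ̂_{·,j} − Θ*_{·,j}` satisfies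
`∑_{i ∉ Sⱼ} |Δⱼ(i)| ≤ 3 ∑_{i ∈ Sⱼ} |Δⱼ(i)|`, where `Sⱼ = {i : Θ*_{i,j} ≠ 0}`. -/
theorem ell1_cone (T m d : ℕ) (hT : 0 < T) (hm : 0 < m) (hd : 0 < d)
    (Y : Matrix (Fin T) (Fin d) ℝ) (X : Matrix (Fin T) (Fin m) ℝ)
    (lam : ℝ) (hlam : 0 < lam)
    (Θstar Θhat : Matrix (Fin m) (Fin d) ℝ)
    (hgrad : ∀ (i : Fin m) (j : Fin d),
      |((1 / (T : ℝ)) • (Xᵀ * (X * Θstar - Y))) i j| ≤ lam / 2)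
    (hmin : ∀ Θ : Matrix (Fin m) (Fin d) ℝ,
      (1 / (2 * (T : ℝ))) * (∑ t, ∑ j, (Y t j - (X * Θhat) t j) ^ 2)
          + lam * ∑ i, ∑ j, |Θhat i j|
        ≤ (1 / (2 * (T : ℝ))) * (∑ t, ∑ j, (Y t j - (X * Θ) t j) ^ 2)
          + lam * ∑ i, ∑ j, |Θ i j|) :
    ∀ j : Fin d,
      ∑ i ∈ Finset.univ.filter (fun i : Fin m => Θstar i j = 0), |Θhat i j - Θstar i j|
        ≤ 3 * ∑ i ∈ Finset.univ.filter (fun i : Fin m => Θstar i j ≠ 0),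
            |Θhat i j - Θstar i j| :=
  ell1_cone_general T m d Y X lam hlam Θstar Θhat hgrad hmin
end

section
/- Let S and Γ be real symmetric m×m matrices, let J ⊆ {1,…,m} with |J| ≤ s, and let γ ≥ 0. Then for every nonzero vector u ∈ ℝ^m satisfying the cone condition ∑_{i ∉ J} |u_i| ≤ γ ∑_{i ∈ J} |u_i|, one has uᵀ S u ≥ ( λ_min(Γ) − (1+γ)² · s · ‖S − Γ‖_{∞,∞} ) · ‖u‖₂², where λ_min(Γ) is the smallest eigenvalue of Γ. -/
/-!
Split `uᵀ S u = uᵀ Γ u + uᵀ (S - Γ) u`. The first term is at least `λ_min(Γ) ‖u‖₂²`, since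
`Γ - λ_min(Γ) • 1` is positive semidefinite. The second is at least `-‖S - Γ‖_{∞,∞} ‖u‖₁²`, and on
the cone `‖u‖₁ ≤ (1 + γ) ∑_{i ∈ J} |uᵢ| ≤ (1 + γ) √s ‖u‖₂` by Cauchy–Schwarz on `J`.
-/

open Matrix Finset

theorem Matrix.IsHermitian.iInf_eigenvalues_mul_dotProduct_self_le {n : Type*} [Fintype n]
    [DecidableEq n] {A : Matrix n n ℝ} (hA : A.IsHermitian) (u : n → ℝ) :
    (⨅ i, hA.eigenvalues i) * (u ⬝ᵥ u) ≤ u ⬝ᵥ A *ᵥ u := by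
  open MatrixOrder in
  have hle : algebraMap ℝ (Matrix n n ℝ) (⨅ i, hA.eigenvalues i) ≤ A := by
    refine algebraMap_le_of_le_spectrum (fun x hx => ?_) hA.isSelfAdjoint
    obtain ⟨i, rfl⟩ := hA.spectrum_real_eq_range_eigenvalues ▸ hx
    exact ciInf_le (Set.finite_range _).bddBelow i
  simpa [sub_mulVec, Algebra.algebraMap_eq_smul_one, smul_mulVec, dotProduct_sub,
    dotProduct_smul] using (Matrix.le_iff.mp hle).dotProduct_mulVec_nonneg u

theorem Matrix.abs_apply_le_iSup_iSup_abs {m n : Type*} [Finite m] [Finite n]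
    (M : Matrix m n ℝ) (i : m) (j : n) : |M i j| ≤ ⨆ i, ⨆ j, |M i j| :=
  (le_ciSup (Set.finite_range _).bddAbove j).trans
    (le_ciSup (f := fun i => ⨆ j, |M i j|) (Set.finite_range _).bddAbove i)

theorem Matrix.abs_dotProduct_mulVec_le {m n : Type*} [Fintype m] [Fintype n]
    {M : Matrix m n ℝ} {K : ℝ} (hK : ∀ i j, |M i j| ≤ K) (u : m → ℝ) (v : n → ℝ) :
    |u ⬝ᵥ M *ᵥ v| ≤ K * ((∑ i, |u i|) * ∑ j, |v j|) :=
  calc |u ⬝ᵥ M *ᵥ v| = |∑ i, ∑ j, u i * M i j * v j| := by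
        simp only [dotProduct, mulVec, mul_sum, mul_assoc]
    _ ≤ ∑ i, ∑ j, |u i * M i j * v j| :=
        (abs_sum_le_sum_abs _ _).trans (sum_le_sum fun i _ => abs_sum_le_sum_abs _ _)
    _ ≤ ∑ i, ∑ j, K * (|u i| * |v j|) := by
        gcongr with i _ j _
        rw [abs_mul, abs_mul, mul_right_comm, mul_comm]
        exact mul_le_mul_of_nonneg_right (hK i j) (by positivity)
    _ = K * ((∑ i, |u i|) * ∑ j, |v j|) := by
        rw [sum_mul_sum, mul_sum]
        simp only [mul_sum]

theorem sum_abs_le_of_cone {ι : Type*} [Fintype ι] [DecidableEq ι] {J : Finset ι} {γ : ℝ}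
    {u : ι → ℝ} (hcone : ∑ i ∈ Jᶜ, |u i| ≤ γ * ∑ i ∈ J, |u i|) :
    ∑ i, |u i| ≤ (1 + γ) * ∑ i ∈ J, |u i| := by
  rw [← sum_add_sum_compl J]
  linarith

theorem sq_sum_abs_le_of_cone {ι : Type*} [Fintype ι] [DecidableEq ι] {J : Finset ι} {s : ℕ}
    (hJ : #J ≤ s) {γ : ℝ} {u : ι → ℝ} (hcone : ∑ i ∈ Jᶜ, |u i| ≤ γ * ∑ i ∈ J, |u i|) :
    (∑ i, |u i|) ^ 2 ≤ (1 + γ) ^ 2 * s * ∑ i, u i ^ 2 := by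
  have hJu : (∑ i ∈ J, |u i|) ^ 2 ≤ s * ∑ i, u i ^ 2 :=
    calc (∑ i ∈ J, |u i|) ^ 2 ≤ #J * ∑ i ∈ J, |u i| ^ 2 := sq_sum_le_card_mul_sum_sq
      _ ≤ s * ∑ i, u i ^ 2 := by
        simp only [sq_abs]
        gcongr
        exact subset_univ J
  calc (∑ i, |u i|) ^ 2 ≤ ((1 + γ) * ∑ i ∈ J, |u i|) ^ 2 :=
        pow_le_pow_left₀ (sum_nonneg fun i _ => abs_nonneg _) (sum_abs_le_of_cone hcone) 2
    _ ≤ (1 + γ) ^ 2 * s * ∑ i, u i ^ 2 := by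
        rw [mul_pow, mul_assoc]
        gcongr

theorem restricted_eigenvalue_bound_general (m s : ℕ)
    (S Γ : Matrix (Fin m) (Fin m) ℝ) (hΓ : Γ.IsHermitian)
    (J : Finset (Fin m)) (hJ : J.card ≤ s) (γ : ℝ) :
    ∀ u : Fin m → ℝ, u ≠ 0 →
      (∑ i ∈ Jᶜ, |u i| ≤ γ * ∑ i ∈ J, |u i|) →
      ((⨅ i, hΓ.eigenvalues i) - (1 + γ) ^ 2 * (s : ℝ) * (⨆ i, ⨆ j, |(S - Γ) i j|))
          * ∑ i, u i ^ 2
        ≤ u ⬝ᵥ S.mulVec u := by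
  intro u _ hcone
  set K := ⨆ i, ⨆ j, |(S - Γ) i j|
  have hK : 0 ≤ K := Real.iSup_nonneg fun i => Real.iSup_nonneg fun j => abs_nonneg _
  have hnorm : u ⬝ᵥ u = ∑ i, u i ^ 2 := by simp only [dotProduct, sq]
  have hΓu := hΓ.iInf_eigenvalues_mul_dotProduct_self_le u
  have hpert := abs_dotProduct_mulVec_le ((S - Γ).abs_apply_le_iSup_iSup_abs) u u
  have hcone' := sq_sum_abs_le_of_cone hJ hcone
  calc ((⨅ i, hΓ.eigenvalues i) - (1 + γ) ^ 2 * s * K) * ∑ i, u i ^ 2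
      = (⨅ i, hΓ.eigenvalues i) * (u ⬝ᵥ u) - K * ((1 + γ) ^ 2 * s * ∑ i, u i ^ 2) := by
        rw [hnorm]; ring
    _ ≤ u ⬝ᵥ Γ *ᵥ u - K * (∑ i, |u i|) ^ 2 := by gcongr
    _ ≤ u ⬝ᵥ Γ *ᵥ u + u ⬝ᵥ (S - Γ) *ᵥ u := by
        linarith [neg_abs_le (u ⬝ᵥ (S - Γ) *ᵥ u), sq (∑ i, |u i|)]
    _ = u ⬝ᵥ S *ᵥ u := by rw [sub_mulVec, dotProduct_sub]; ring

/-- Localized restricted eigenvalue bound: for real symmetric `m × m` matrices `S` and `Γ`,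
an index set `J` of size at most `s` and `γ ≥ 0`, every nonzero vector `u` in the cone
`∑_{i ∉ J} |uᵢ| ≤ γ ∑_{i ∈ J} |uᵢ|` satisfies
`uᵀ S u ≥ (λ_min(Γ) − (1+γ)² s ‖S − Γ‖_{∞,∞}) ‖u‖₂²`. -/
theorem restricted_eigenvalue_bound (m s : ℕ) (hm : 0 < m)
    (S Γ : Matrix (Fin m) (Fin m) ℝ) (hS : S.IsSymm) (hΓ : Γ.IsHermitian)
    (J : Finset (Fin m)) (hJ : J.card ≤ s) (γ : ℝ) (hγ : 0 ≤ γ) :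
    ∀ u : Fin m → ℝ, u ≠ 0 →
      (∑ i ∈ Jᶜ, |u i| ≤ γ * ∑ i ∈ J, |u i|) →
      ((⨅ i, hΓ.eigenvalues i) - (1 + γ) ^ 2 * (s : ℝ) * (⨆ i, ⨆ j, |(S - Γ) i j|))
          * ∑ i, u i ^ 2
        ≤ u ⬝ᵥ S.mulVec u :=
  restricted_eigenvalue_bound_general m s S Γ hΓ J hJ γ
end

section
/- Let r₁, r₂, r₃, r₄ : Ω → ℝ be random variables with E|r_i|^{4+4ε} ≤ M₄ for each i (so that the product r₁r₂r₃r₄ is integrable by Hölder's inequality). Then for every τ > 0, | E[r₁ r₂ r₃ r₄] − E[ψ_τ(r₁) ψ_τ(r₂) ψ_τ(r₃) ψ_τ(r₄)] | ≤ 4 M₄ / τ^{4ε}. -/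
open MeasureTheory

/-- The truncation operator `ψ_τ(x) = sign(x) · min(|x|, τ)`. -/
noncomputable def trunc (τ x : ℝ) : ℝ := Real.sign x * min |x| τ

lemma trunc_eq (τ x : ℝ) (hτ : 0 ≤ τ) : trunc τ x = max (-τ) (min x τ) := by
  unfold trunc
  rcases lt_trichotomy x 0 with h | h | h
  · rw [Real.sign_of_neg h, abs_of_neg h]
    rw [min_eq_left (h.le.trans hτ)]
    rcases le_total (-x) τ with h2 | h2
    · rw [min_eq_left h2, max_eq_right (by linarith)]; ring
    · rw [min_eq_right h2, max_eq_left (by linarith)]; ring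
  · simp [h, Real.sign_zero, le_of_lt, hτ]
  · rw [Real.sign_of_pos h, abs_of_pos h, one_mul]
    rw [max_eq_right]
    exact le_trans (by linarith) (le_min h.le hτ)

lemma abs_trunc_le_abs (τ x : ℝ) (hτ : 0 ≤ τ) : |trunc τ x| ≤ |x| := by
  rw [trunc_eq τ x hτ, abs_le]
  constructor
  · exact le_max_of_le_right (le_min (neg_abs_le x) (by linarith [abs_nonneg x]))
  · exact max_le (by linarith [abs_nonneg x]) ((min_le_left x τ).trans (le_abs_self x))

lemma abs_trunc_le (τ x : ℝ) (hτ : 0 ≤ τ) : |trunc τ x| ≤ τ := by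
  rw [trunc_eq τ x hτ, abs_le]
  refine ⟨le_max_left _ _, max_le (by linarith) (min_le_right _ _)⟩

lemma trunc_eq_self (τ x : ℝ) (hτ : 0 ≤ τ) (h : |x| ≤ τ) : trunc τ x = x := by
  rw [trunc_eq τ x hτ, abs_le] at *
  rw [min_eq_left h.2, max_eq_right h.1]

lemma measurable_trunc (τ : ℝ) : Measurable (trunc τ) := by
  unfold trunc
  have h1 : Measurable (Real.sign) := by
    have : Real.sign = fun x : ℝ => if x < 0 then (-1 : ℝ) else if 0 < x then 1 else 0 := by
      funext x; rfl
    rw [this]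
    exact Measurable.ite measurableSet_Iio measurable_const
      (Measurable.ite measurableSet_Ioi measurable_const measurable_const)
  exact (h1.mul ((measurable_id.abs).min measurable_const))

/-- Key deviation bound: `|x - trunc τ x| ≤ τ⁻ˢ |x|^(1+s)`. -/
lemma abs_sub_trunc_le (τ x s : ℝ) (hτ : 0 < τ) (hs : 0 ≤ s) :
    |x - trunc τ x| ≤ τ ^ (-s) * |x| ^ (1 + s) := by
  rcases le_or_gt |x| τ with h | h
  · rw [trunc_eq_self τ x hτ.le h, sub_self, abs_zero]
    positivity
  · have hx : 0 < |x| := hτ.trans h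
    have h1 : |x - trunc τ x| ≤ |x| := by
      rw [trunc_eq τ x hτ.le]
      rcases le_total 0 x with hx0 | hx0
      · rw [abs_of_nonneg hx0] at h
        rw [min_eq_right h.le, max_eq_right (by linarith : -τ ≤ τ),
          abs_of_nonneg (by linarith : (0:ℝ) ≤ x - τ), abs_of_nonneg hx0]
        linarith
      · rw [abs_of_nonpos hx0] at h
        rw [min_eq_left (by linarith : x ≤ τ), max_eq_left (by linarith : x ≤ -τ),
          abs_of_nonpos (by linarith : x - -τ ≤ 0), abs_of_nonpos hx0]
        linarith
    calc |x - trunc τ x| ≤ |x| := h1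
      _ = |x| * 1 := (mul_one _).symm
      _ ≤ |x| * (|x| / τ) ^ s := by
          apply mul_le_mul_of_nonneg_left _ (abs_nonneg x)
          exact Real.one_le_rpow (by rw [le_div_iff₀ hτ, one_mul]; exact h.le) hs
      _ = τ ^ (-s) * |x| ^ (1 + s) := by
          rw [Real.div_rpow (abs_nonneg x) hτ.le, Real.rpow_neg hτ.le,
            Real.rpow_add hx, Real.rpow_one]
          ring
  
/-- Weighted AM-GM step. -/
lemma amgm_step (a b c d s : ℝ) (ha : 0 ≤ a) (hb : 0 ≤ b) (hc : 0 ≤ c) (hd : 0 ≤ d)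
    (hs : 0 ≤ s) :
    a ^ (1 + s) * b * c * d ≤
      ((1 + s) * a ^ (4 + s) + b ^ (4 + s) + c ^ (4 + s) + d ^ (4 + s)) / (4 + s) := by
  have h4s : (0 : ℝ) < 4 + s := by linarith
  set w₁ : ℝ := (1 + s) / (4 + s) with hw₁
  set w : ℝ := 1 / (4 + s) with hw
  have h4s' : (4:ℝ) + s ≠ 0 := h4s.ne'
  have hww : w₁ + w + w + w = 1 := by rw [hw₁, hw]; field_simp; try ring
  have key := Real.geom_mean_le_arith_mean4_weighted
    (by positivity : (0:ℝ) ≤ w₁) (by positivity : (0:ℝ) ≤ w) (by positivity : (0:ℝ) ≤ w)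
    (by positivity : (0:ℝ) ≤ w)
    (Real.rpow_nonneg ha (4+s)) (Real.rpow_nonneg hb (4+s))
    (Real.rpow_nonneg hc (4+s)) (Real.rpow_nonneg hd (4+s)) hww
  have e₁ : (a ^ (4 + s)) ^ w₁ = a ^ (1 + s) := by
    rw [← Real.rpow_mul ha, show (4 + s) * w₁ = 1 + s by rw [hw₁]; field_simp]
  have e : ∀ x : ℝ, 0 ≤ x → (x ^ (4 + s)) ^ w = x := by
    intro x hx
    rw [← Real.rpow_mul hx, show (4 + s) * w = 1 by rw [hw]; field_simp, Real.rpow_one]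
  rw [e₁, e b hb, e c hc, e d hd] at key
  calc a ^ (1+s) * b * c * d ≤ w₁ * a ^ (4+s) + w * b ^ (4+s) + w * c ^ (4+s) + w * d ^ (4+s) :=
        key
    _ = ((1 + s) * a ^ (4 + s) + b ^ (4 + s) + c ^ (4 + s) + d ^ (4 + s)) / (4 + s) := by
        rw [hw₁, hw]; ring

/-- Main pointwise bound. -/
lemma pointwise_bound (τ s : ℝ) (hτ : 0 < τ) (hs : 0 ≤ s) (x₀ x₁ x₂ x₃ : ℝ) :
    |x₀ * x₁ * x₂ * x₃ - trunc τ x₀ * trunc τ x₁ * trunc τ x₂ * trunc τ x₃|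
      ≤ τ ^ (-s) * (|x₀| ^ (4 + s) + |x₁| ^ (4 + s) + |x₂| ^ (4 + s) + |x₃| ^ (4 + s)) := by
  set b₀ := trunc τ x₀; set b₁ := trunc τ x₁; set b₂ := trunc τ x₂; set b₃ := trunc τ x₃
  have hid : x₀ * x₁ * x₂ * x₃ - b₀ * b₁ * b₂ * b₃
      = (x₀ - b₀) * x₁ * x₂ * x₃ + b₀ * (x₁ - b₁) * x₂ * x₃
        + b₀ * b₁ * (x₂ - b₂) * x₃ + b₀ * b₁ * b₂ * (x₃ - b₃) := by ring
  have hτs : (0:ℝ) ≤ τ ^ (-s) := Real.rpow_nonneg hτ.le _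
  have hb₀ := abs_trunc_le_abs τ x₀ hτ.le
  have hb₁ := abs_trunc_le_abs τ x₁ hτ.le
  have hb₂ := abs_trunc_le_abs τ x₂ hτ.le
  have hb₃ := abs_trunc_le_abs τ x₃ hτ.le
  have hd₀ := abs_sub_trunc_le τ x₀ s hτ hs
  have hd₁ := abs_sub_trunc_le τ x₁ s hτ hs
  have hd₂ := abs_sub_trunc_le τ x₂ s hτ hs
  have hd₃ := abs_sub_trunc_le τ x₃ s hτ hs
  have habs : ∀ y : ℝ, (0:ℝ) ≤ |y| := fun y => abs_nonneg y
  have t₀ : |(x₀ - b₀) * x₁ * x₂ * x₃| ≤ τ ^ (-s) * (|x₀| ^ (1+s) * |x₁| * |x₂| * |x₃|) := by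
    rw [abs_mul, abs_mul, abs_mul]
    calc |x₀ - b₀| * |x₁| * |x₂| * |x₃|
        ≤ (τ ^ (-s) * |x₀| ^ (1+s)) * |x₁| * |x₂| * |x₃| := by
          gcongr
      _ = τ ^ (-s) * (|x₀| ^ (1+s) * |x₁| * |x₂| * |x₃|) := by ring
  have t₁ : |b₀ * (x₁ - b₁) * x₂ * x₃| ≤ τ ^ (-s) * (|x₁| ^ (1+s) * |x₀| * |x₂| * |x₃|) := by
    rw [abs_mul, abs_mul, abs_mul]
    calc |b₀| * |x₁ - b₁| * |x₂| * |x₃|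
        ≤ |x₀| * (τ ^ (-s) * |x₁| ^ (1+s)) * |x₂| * |x₃| := by gcongr
      _ = τ ^ (-s) * (|x₁| ^ (1+s) * |x₀| * |x₂| * |x₃|) := by ring
  have t₂ : |b₀ * b₁ * (x₂ - b₂) * x₃| ≤ τ ^ (-s) * (|x₂| ^ (1+s) * |x₀| * |x₁| * |x₃|) := by
    rw [abs_mul, abs_mul, abs_mul]
    calc |b₀| * |b₁| * |x₂ - b₂| * |x₃|
        ≤ |x₀| * |x₁| * (τ ^ (-s) * |x₂| ^ (1+s)) * |x₃| := by gcongr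
      _ = τ ^ (-s) * (|x₂| ^ (1+s) * |x₀| * |x₁| * |x₃|) := by ring
  have t₃ : |b₀ * b₁ * b₂ * (x₃ - b₃)| ≤ τ ^ (-s) * (|x₃| ^ (1+s) * |x₀| * |x₁| * |x₂|) := by
    rw [abs_mul, abs_mul, abs_mul]
    calc |b₀| * |b₁| * |b₂| * |x₃ - b₃|
        ≤ |x₀| * |x₁| * |x₂| * (τ ^ (-s) * |x₃| ^ (1+s)) := by gcongr
      _ = τ ^ (-s) * (|x₃| ^ (1+s) * |x₀| * |x₁| * |x₂|) := by ring
  have a₀ := amgm_step |x₀| |x₁| |x₂| |x₃| s (habs _) (habs _) (habs _) (habs _) hs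
  have a₁ := amgm_step |x₁| |x₀| |x₂| |x₃| s (habs _) (habs _) (habs _) (habs _) hs
  have a₂ := amgm_step |x₂| |x₀| |x₁| |x₃| s (habs _) (habs _) (habs _) (habs _) hs
  have a₃ := amgm_step |x₃| |x₀| |x₁| |x₂| s (habs _) (habs _) (habs _) (habs _) hs
  have h4s : (0:ℝ) < 4 + s := by linarith
  have hsum : |x₀| ^ (1+s) * |x₁| * |x₂| * |x₃| + |x₁| ^ (1+s) * |x₀| * |x₂| * |x₃|
      + |x₂| ^ (1+s) * |x₀| * |x₁| * |x₃| + |x₃| ^ (1+s) * |x₀| * |x₁| * |x₂|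
      ≤ |x₀| ^ (4 + s) + |x₁| ^ (4 + s) + |x₂| ^ (4 + s) + |x₃| ^ (4 + s) := by
    have : |x₀| ^ (1+s) * |x₁| * |x₂| * |x₃| + |x₁| ^ (1+s) * |x₀| * |x₂| * |x₃|
      + |x₂| ^ (1+s) * |x₀| * |x₁| * |x₃| + |x₃| ^ (1+s) * |x₀| * |x₁| * |x₂|
      ≤ ((1+s) * |x₀| ^ (4+s) + |x₁| ^ (4+s) + |x₂| ^ (4+s) + |x₃| ^ (4+s)) / (4+s)
        + ((1+s) * |x₁| ^ (4+s) + |x₀| ^ (4+s) + |x₂| ^ (4+s) + |x₃| ^ (4+s)) / (4+s)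
        + ((1+s) * |x₂| ^ (4+s) + |x₀| ^ (4+s) + |x₁| ^ (4+s) + |x₃| ^ (4+s)) / (4+s)
        + ((1+s) * |x₃| ^ (4+s) + |x₀| ^ (4+s) + |x₁| ^ (4+s) + |x₂| ^ (4+s)) / (4+s) := by
      linarith
    calc _ ≤ _ := this
      _ = |x₀| ^ (4 + s) + |x₁| ^ (4 + s) + |x₂| ^ (4 + s) + |x₃| ^ (4 + s) := by
          field_simp; ring
  calc |x₀ * x₁ * x₂ * x₃ - b₀ * b₁ * b₂ * b₃|
      ≤ |(x₀ - b₀) * x₁ * x₂ * x₃| + |b₀ * (x₁ - b₁) * x₂ * x₃|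
        + |b₀ * b₁ * (x₂ - b₂) * x₃| + |b₀ * b₁ * b₂ * (x₃ - b₃)| := by
        rw [hid]
        exact (abs_add_le _ _).trans (add_le_add ((abs_add_le _ _).trans
          (add_le_add (abs_add_le _ _) le_rfl)) le_rfl)
    _ ≤ τ ^ (-s) * (|x₀| ^ (1+s) * |x₁| * |x₂| * |x₃|)
        + τ ^ (-s) * (|x₁| ^ (1+s) * |x₀| * |x₂| * |x₃|)
        + τ ^ (-s) * (|x₂| ^ (1+s) * |x₀| * |x₁| * |x₃|)
        + τ ^ (-s) * (|x₃| ^ (1+s) * |x₀| * |x₁| * |x₂|) := by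
        linarith
    _ = τ ^ (-s) * (|x₀| ^ (1+s) * |x₁| * |x₂| * |x₃| + |x₁| ^ (1+s) * |x₀| * |x₂| * |x₃|
        + |x₂| ^ (1+s) * |x₀| * |x₁| * |x₃| + |x₃| ^ (1+s) * |x₀| * |x₁| * |x₂|) := by ring
    _ ≤ τ ^ (-s) * (|x₀| ^ (4 + s) + |x₁| ^ (4 + s) + |x₂| ^ (4 + s) + |x₃| ^ (4 + s)) := by
        exact mul_le_mul_of_nonneg_left hsum hτs

/-- Truncation bias for a product of four random variables: if `E|rᵢ|^{4+4ε} ≤ M₄` for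
each `i`, then for every `τ > 0`,
`|E[r₁r₂r₃r₄] − E[ψ_τ(r₁)ψ_τ(r₂)ψ_τ(r₃)ψ_τ(r₄)]| ≤ 4 M₄ / τ^{4ε}`. -/
theorem truncation_bias_fourth_moment {Ω : Type*} [MeasurableSpace Ω]
    (P : Measure Ω) [IsProbabilityMeasure P]
    (ε M₄ : ℝ) (hε : 0 < ε) (hε1 : ε ≤ 1) (hM : 0 < M₄)
    (r : Fin 4 → Ω → ℝ) (hmeas : ∀ i, Measurable (r i))
    (hint : ∀ i, Integrable (fun ω => |r i ω| ^ (4 + 4 * ε)) P)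
    (hmom : ∀ i, ∫ ω, |r i ω| ^ (4 + 4 * ε) ∂P ≤ M₄)
    (τ : ℝ) (hτ : 0 < τ) :
    |(∫ ω, r 0 ω * r 1 ω * r 2 ω * r 3 ω ∂P)
        - ∫ ω, trunc τ (r 0 ω) * trunc τ (r 1 ω) * trunc τ (r 2 ω) * trunc τ (r 3 ω) ∂P|
      ≤ 4 * M₄ / τ ^ (4 * ε) := by
  set s := 4 * ε with hs_def
  have hs : 0 ≤ s := by positivity
  have hqs : (4 : ℝ) + 4 * ε = 4 + s := by rw [hs_def]
  -- pointwise bound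
  have hpt : ∀ ω, |r 0 ω * r 1 ω * r 2 ω * r 3 ω
      - trunc τ (r 0 ω) * trunc τ (r 1 ω) * trunc τ (r 2 ω) * trunc τ (r 3 ω)|
      ≤ τ ^ (-s) * (|r 0 ω| ^ (4 + s) + |r 1 ω| ^ (4 + s)
          + |r 2 ω| ^ (4 + s) + |r 3 ω| ^ (4 + s)) :=
    fun ω => pointwise_bound τ s hτ hs _ _ _ _
  -- integrability of the dominating function
  have hint' : ∀ i : Fin 4, Integrable (fun ω => |r i ω| ^ (4 + s)) P := by
    intro i; rw [← hqs]; exact hint i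
  have hg : Integrable (fun ω => τ ^ (-s) * (|r 0 ω| ^ (4 + s) + |r 1 ω| ^ (4 + s)
      + |r 2 ω| ^ (4 + s) + |r 3 ω| ^ (4 + s))) P := by
    exact ((((hint' 0).add (hint' 1)).add (hint' 2)).add (hint' 3)).const_mul _
  -- measurability
  have hmt : ∀ i : Fin 4, Measurable fun ω => trunc τ (r i ω) :=
    fun i => (measurable_trunc τ).comp (hmeas i)
  have hf2meas : Measurable fun ω =>
      trunc τ (r 0 ω) * trunc τ (r 1 ω) * trunc τ (r 2 ω) * trunc τ (r 3 ω) :=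
    (((hmt 0).mul (hmt 1)).mul (hmt 2)).mul (hmt 3)
  have hf1meas : Measurable fun ω => r 0 ω * r 1 ω * r 2 ω * r 3 ω :=
    (((hmeas 0).mul (hmeas 1)).mul (hmeas 2)).mul (hmeas 3)
  -- integrability of truncated product (bounded)
  have hf2bd : ∀ ω, ‖trunc τ (r 0 ω) * trunc τ (r 1 ω) * trunc τ (r 2 ω) * trunc τ (r 3 ω)‖
      ≤ τ ^ 4 := by
    intro ω
    rw [Real.norm_eq_abs, abs_mul, abs_mul, abs_mul]
    calc |trunc τ (r 0 ω)| * |trunc τ (r 1 ω)| * |trunc τ (r 2 ω)| * |trunc τ (r 3 ω)|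
        ≤ τ * τ * τ * τ := by
          gcongr <;> first
            | exact abs_nonneg _
            | exact abs_trunc_le τ _ hτ.le
      _ = τ ^ 4 := by ring
  have hf2 : Integrable (fun ω =>
      trunc τ (r 0 ω) * trunc τ (r 1 ω) * trunc τ (r 2 ω) * trunc τ (r 3 ω)) P := by
    apply (integrable_const (τ ^ 4)).mono' hf2meas.aestronglyMeasurable
    exact Filter.Eventually.of_forall hf2bd
  -- integrability of raw product
  have hf1 : Integrable (fun ω => r 0 ω * r 1 ω * r 2 ω * r 3 ω) P := by
    apply Integrable.mono' ((integrable_const (τ ^ 4)).add hg) hf1meas.aestronglyMeasurable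
    apply Filter.Eventually.of_forall
    intro ω
    rw [Real.norm_eq_abs]
    calc |r 0 ω * r 1 ω * r 2 ω * r 3 ω|
        ≤ |trunc τ (r 0 ω) * trunc τ (r 1 ω) * trunc τ (r 2 ω) * trunc τ (r 3 ω)|
          + |r 0 ω * r 1 ω * r 2 ω * r 3 ω
            - trunc τ (r 0 ω) * trunc τ (r 1 ω) * trunc τ (r 2 ω) * trunc τ (r 3 ω)| := by
          have : r 0 ω * r 1 ω * r 2 ω * r 3 ω
              = trunc τ (r 0 ω) * trunc τ (r 1 ω) * trunc τ (r 2 ω) * trunc τ (r 3 ω)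
                + (r 0 ω * r 1 ω * r 2 ω * r 3 ω
                  - trunc τ (r 0 ω) * trunc τ (r 1 ω) * trunc τ (r 2 ω) * trunc τ (r 3 ω)) := by
            ring
          exact (congrArg abs this).le.trans (abs_add_le _ _)
      _ ≤ τ ^ 4 + τ ^ (-s) * (|r 0 ω| ^ (4 + s) + |r 1 ω| ^ (4 + s)
            + |r 2 ω| ^ (4 + s) + |r 3 ω| ^ (4 + s)) := by
          have := hf2bd ω
          rw [Real.norm_eq_abs] at this
          exact add_le_add this (hpt ω)
  -- main estimate
  rw [← integral_sub hf1 hf2]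
  have hb : |∫ ω, (r 0 ω * r 1 ω * r 2 ω * r 3 ω
      - trunc τ (r 0 ω) * trunc τ (r 1 ω) * trunc τ (r 2 ω) * trunc τ (r 3 ω)) ∂P|
      ≤ ∫ ω, τ ^ (-s) * (|r 0 ω| ^ (4 + s) + |r 1 ω| ^ (4 + s)
          + |r 2 ω| ^ (4 + s) + |r 3 ω| ^ (4 + s)) ∂P := by
    rw [← Real.norm_eq_abs]
    apply norm_integral_le_of_norm_le hg
    apply Filter.Eventually.of_forall
    intro ω
    rw [Real.norm_eq_abs]
    exact hpt ω
  refine hb.trans ?_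
  rw [integral_const_mul]
  have hτs : (0:ℝ) ≤ τ ^ (-s) := Real.rpow_nonneg hτ.le _
  have hsum_int : ∫ ω, (|r 0 ω| ^ (4 + s) + |r 1 ω| ^ (4 + s)
      + |r 2 ω| ^ (4 + s) + |r 3 ω| ^ (4 + s)) ∂P ≤ 4 * M₄ := by
    have i01 : Integrable (fun ω => |r 0 ω| ^ (4 + s) + |r 1 ω| ^ (4 + s)) P :=
      (hint' 0).add (hint' 1)
    have i012 : Integrable
        (fun ω => |r 0 ω| ^ (4 + s) + |r 1 ω| ^ (4 + s) + |r 2 ω| ^ (4 + s)) P :=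
      i01.add (hint' 2)
    rw [integral_add i012 (hint' 3), integral_add i01 (hint' 2),
      integral_add (hint' 0) (hint' 1)]
    have h0 := hmom 0; have h1 := hmom 1; have h2 := hmom 2; have h3 := hmom 3
    rw [hqs] at h0 h1 h2 h3
    linarith
  calc τ ^ (-s) * ∫ ω, (|r 0 ω| ^ (4 + s) + |r 1 ω| ^ (4 + s)
      + |r 2 ω| ^ (4 + s) + |r 3 ω| ^ (4 + s)) ∂P
      ≤ τ ^ (-s) * (4 * M₄) := mul_le_mul_of_nonneg_left hsum_int hτs
    _ = 4 * M₄ / τ ^ s := by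
        rw [Real.rpow_neg hτ.le]
        ring
end

section
/- Let r₁, r₂, r₃, r₄ : Ω → ℝ be random variables with E|r_i|^{4+4ε} ≤ M₄ for each i, and let τ > 0. Then E[ (ψ_τ(r₁) ψ_τ(r₂) ψ_τ(r₃) ψ_τ(r₄))² ] ≤ τ^{4−4ε} · M₄, and more generally, for every integer n ≥ 2, E[ |ψ_τ(r₁) ψ_τ(r₂) ψ_τ(r₃) ψ_τ(r₄)|ⁿ ] ≤ τ^{4n−4−4ε} · M₄. -/
open MeasureTheory

lemma abs_trunc (τ x : ℝ) (hτ : 0 < τ) : |Real.sign x * min |x| τ| = min |x| τ := by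
  rcases lt_trichotomy x 0 with h | h | h
  · rw [Real.sign_of_neg h]
    rw [abs_mul]
    simp [abs_of_nonneg (le_min (abs_nonneg x) hτ.le)]
  · simp [h, hτ.le]
  · rw [Real.sign_of_pos h, one_mul, abs_of_nonneg (le_min (abs_nonneg x) hτ.le)]

lemma core (ε τ p : ℝ) (hε : 0 < ε) (hp : 1 + ε ≤ p) (hτ : 0 < τ) (b : Fin 4 → ℝ) :
    (∏ i, min |b i| τ) ^ p ≤ τ ^ (4*p - 4 - 4*ε) * ((1/4) * ∑ i, |b i| ^ (4 + 4*ε)) := by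
  set a : Fin 4 → ℝ := fun i => min |b i| τ with ha_def
  have ha : ∀ i, 0 ≤ a i := fun i => le_min (abs_nonneg _) hτ.le
  have haτ : ∀ i, a i ≤ τ := fun i => min_le_right _ _
  have hab : ∀ i, a i ≤ |b i| := fun i => min_le_left _ _
  have hppos : 0 < p := lt_of_lt_of_le (by linarith) hp
  have hq : 0 ≤ p - 1 - ε := by linarith
  have step1 : (∏ i, a i) ^ p = ∏ i, (a i) ^ p := by
    rw [← Real.finset_prod_rpow _ _ (fun i _ => ha i)]
  have step2 : ∀ i, (a i) ^ p ≤ τ ^ (p - 1 - ε) * (a i) ^ (1 + ε) := by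
    intro i
    rcases eq_or_lt_of_le (ha i) with h | h
    · rw [← h, Real.zero_rpow hppos.ne', Real.zero_rpow (by linarith : (1:ℝ)+ε ≠ 0)]
      simp [Real.rpow_nonneg hτ.le]
    · have : (a i) ^ p = (a i) ^ (p - 1 - ε) * (a i) ^ (1 + ε) := by
        rw [← Real.rpow_add h]; ring_nf
      rw [this]
      exact mul_le_mul_of_nonneg_right
        (Real.rpow_le_rpow (ha i) (haτ i) hq) (Real.rpow_nonneg (ha i) _)
  have step3 : (∏ i, a i) ^ p ≤ τ ^ (4*p - 4 - 4*ε) * ∏ i, (a i) ^ (1 + ε) := by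
    rw [step1]
    calc ∏ i, (a i) ^ p ≤ ∏ i, (τ ^ (p - 1 - ε) * (a i) ^ (1 + ε)) :=
          Finset.prod_le_prod (fun i _ => Real.rpow_nonneg (ha i) _) (fun i _ => step2 i)
      _ = (τ ^ (p - 1 - ε)) ^ (4:ℕ) * ∏ i, (a i) ^ (1 + ε) := by
          rw [Finset.prod_mul_distrib, Finset.prod_const, Finset.card_univ, Fintype.card_fin]
      _ = τ ^ (4*p - 4 - 4*ε) * ∏ i, (a i) ^ (1 + ε) := by
          rw [← Real.rpow_natCast (τ ^ (p-1-ε)) 4, ← Real.rpow_mul hτ.le]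
          push_cast; ring_nf
  have step4 : ∏ i, (a i) ^ (1 + ε) ≤ (1/4) * ∑ i, |b i| ^ (4 + 4*ε) := by
    set c : Fin 4 → ℝ := fun i => (a i) ^ (1 + ε) with hc_def
    have hc : ∀ i, 0 ≤ c i := fun i => Real.rpow_nonneg (ha i) _
    have hc4 : ∀ i, (c i) ^ (4:ℕ) ≤ |b i| ^ (4 + 4*ε) := by
      intro i
      have : (c i) ^ (4:ℕ) = (a i) ^ (4 + 4*ε) := by
        rw [hc_def, ← Real.rpow_natCast ((a i) ^ (1+ε)) 4, ← Real.rpow_mul (ha i)]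
        push_cast; ring_nf
      rw [this]
      exact Real.rpow_le_rpow (ha i) (hab i) (by linarith)
    have amgm : ∏ i, c i ≤ (1/4) * ∑ i, (c i) ^ (4:ℕ) := by
      have h0 := hc 0; have h1 := hc 1; have h2 := hc 2; have h3 := hc 3
      rw [Fin.prod_univ_four, Fin.sum_univ_four]
      nlinarith [sq_nonneg (c 0 * c 1 - c 2 * c 3), sq_nonneg (c 0 ^ 2 - c 1 ^ 2),
        sq_nonneg (c 2 ^ 2 - c 3 ^ 2), sq_nonneg (c 0 - c 1), sq_nonneg (c 2 - c 3),
        mul_nonneg h0 h1, mul_nonneg h2 h3, mul_nonneg (mul_nonneg h0 h1) h2]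
    calc ∏ i, c i ≤ (1/4) * ∑ i, (c i) ^ (4:ℕ) := amgm
      _ ≤ (1/4) * ∑ i, |b i| ^ (4 + 4*ε) := by
          apply mul_le_mul_of_nonneg_left (Finset.sum_le_sum (fun i _ => hc4 i)) (by norm_num)
  calc (∏ i, a i) ^ p ≤ τ ^ (4*p - 4 - 4*ε) * ∏ i, (a i) ^ (1 + ε) := step3
    _ ≤ τ ^ (4*p - 4 - 4*ε) * ((1/4) * ∑ i, |b i| ^ (4 + 4*ε)) :=
        mul_le_mul_of_nonneg_left step4 (Real.rpow_nonneg hτ.le _)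

lemma main_aux {Ω : Type*} [MeasurableSpace Ω]
    (P : Measure Ω) [IsProbabilityMeasure P]
    (ε M₄ : ℝ) (hε : 0 < ε) (hM : 0 < M₄)
    (r : Fin 4 → Ω → ℝ)
    (hint : ∀ i, Integrable (fun ω => |r i ω| ^ (4 + 4 * ε)) P)
    (hmom : ∀ i, ∫ ω, |r i ω| ^ (4 + 4 * ε) ∂P ≤ M₄)
    (τ : ℝ) (hτ : 0 < τ) (p : ℝ) (hp : 1 + ε ≤ p) :
    ∫ ω, (∏ i, min |r i ω| τ) ^ p ∂P ≤ τ ^ (4*p - 4 - 4*ε) * M₄ := by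
  set C := τ ^ (4*p - 4 - 4*ε) with hC
  have hC0 : 0 ≤ C := Real.rpow_nonneg hτ.le _
  have hgint : Integrable (fun ω => C * ((1/4) * ∑ i, |r i ω| ^ (4 + 4*ε))) P := by
    apply Integrable.const_mul
    apply Integrable.const_mul
    exact integrable_finset_sum _ (fun i _ => hint i)
  have hle : ∫ ω, (∏ i, min |r i ω| τ) ^ p ∂P
      ≤ ∫ ω, C * ((1/4) * ∑ i, |r i ω| ^ (4 + 4*ε)) ∂P := by
    apply integral_mono_of_nonneg
    · exact Filter.Eventually.of_forall fun ω =>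
        Real.rpow_nonneg (Finset.prod_nonneg fun i _ => le_min (abs_nonneg _) hτ.le) _
    · exact hgint
    · exact Filter.Eventually.of_forall fun ω => core ε τ p hε hp hτ (fun i => r i ω)
  have heq : ∫ ω, C * ((1/4) * ∑ i, |r i ω| ^ (4 + 4*ε)) ∂P
      = C * ((1/4) * ∑ i, ∫ ω, |r i ω| ^ (4 + 4*ε) ∂P) := by
    rw [integral_const_mul]
    congr 1
    rw [integral_const_mul]
    congr 1
    exact integral_finset_sum _ (fun i _ => hint i)
  have hsum : ∑ i, ∫ ω, |r i ω| ^ (4 + 4*ε) ∂P ≤ 4 * M₄ := by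
    calc ∑ i : Fin 4, ∫ ω, |r i ω| ^ (4 + 4*ε) ∂P ≤ ∑ _i : Fin 4, M₄ :=
          Finset.sum_le_sum fun i _ => hmom i
      _ = 4 * M₄ := by simp [Finset.sum_const]
  calc ∫ ω, (∏ i, min |r i ω| τ) ^ p ∂P
      ≤ C * ((1/4) * ∑ i, ∫ ω, |r i ω| ^ (4 + 4*ε) ∂P) := heq ▸ hle
    _ ≤ C * ((1/4) * (4 * M₄)) := by
        apply mul_le_mul_of_nonneg_left _ hC0
        apply mul_le_mul_of_nonneg_left hsum (by norm_num)
    _ = C * M₄ := by ring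

/-- Moment bounds for a truncated product of four random variables: if
`E|rᵢ|^{4+4ε} ≤ M₄` for each `i` and `τ > 0`, then
`E[(ψ_τ(r₁)ψ_τ(r₂)ψ_τ(r₃)ψ_τ(r₄))²] ≤ τ^{4−4ε} M₄`, and for every integer `n ≥ 2`,
`E[|ψ_τ(r₁)ψ_τ(r₂)ψ_τ(r₃)ψ_τ(r₄)|ⁿ] ≤ τ^{4n−4−4ε} M₄`. -/
theorem truncated_product_moment_bounds {Ω : Type*} [MeasurableSpace Ω]
    (P : Measure Ω) [IsProbabilityMeasure P]
    (ε M₄ : ℝ) (hε : 0 < ε) (hε1 : ε ≤ 1) (hM : 0 < M₄)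
    (r : Fin 4 → Ω → ℝ) (hmeas : ∀ i, Measurable (r i))
    (hint : ∀ i, Integrable (fun ω => |r i ω| ^ (4 + 4 * ε)) P)
    (hmom : ∀ i, ∫ ω, |r i ω| ^ (4 + 4 * ε) ∂P ≤ M₄)
    (τ : ℝ) (hτ : 0 < τ) :
    (∫ ω, (trunc τ (r 0 ω) * trunc τ (r 1 ω) * trunc τ (r 2 ω) * trunc τ (r 3 ω)) ^ 2 ∂P
        ≤ τ ^ (4 - 4 * ε) * M₄) ∧
    ∀ n : ℕ, 2 ≤ n →
      ∫ ω, |trunc τ (r 0 ω) * trunc τ (r 1 ω) * trunc τ (r 2 ω) * trunc τ (r 3 ω)| ^ n ∂P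
        ≤ τ ^ (4 * (n : ℝ) - 4 - 4 * ε) * M₄ := by
  have habs : ∀ ω, |trunc τ (r 0 ω) * trunc τ (r 1 ω) * trunc τ (r 2 ω) * trunc τ (r 3 ω)|
      = ∏ i, min |r i ω| τ := by
    intro ω
    rw [Fin.prod_univ_four, abs_mul, abs_mul, abs_mul]
    simp only [trunc, abs_trunc _ _ hτ]
  constructor
  · have heq : (fun ω => (trunc τ (r 0 ω) * trunc τ (r 1 ω) * trunc τ (r 2 ω)
        * trunc τ (r 3 ω)) ^ 2) = fun ω => (∏ i, min |r i ω| τ) ^ ((2:ℕ):ℝ) := by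
      funext ω
      rw [Real.rpow_natCast, ← habs ω, sq_abs]
    rw [heq]
    have := main_aux P ε M₄ hε hM r hint hmom τ hτ 2 (by linarith)
    have he : τ ^ (4*(2:ℝ) - 4 - 4*ε) = τ ^ (4 - 4*ε) := by norm_num
    rw [he] at this
    convert this using 3 <;> norm_num
  · intro n hn
    have heq : (fun ω => |trunc τ (r 0 ω) * trunc τ (r 1 ω) * trunc τ (r 2 ω)
        * trunc τ (r 3 ω)| ^ n) = fun ω => (∏ i, min |r i ω| τ) ^ ((n:ℕ):ℝ) := by
      funext ω
      rw [Real.rpow_natCast, habs ω]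
    rw [heq]
    have hn2 : (2:ℝ) ≤ (n:ℝ) := by exact_mod_cast hn
    exact main_aux P ε M₄ hε hM r hint hmom τ hτ n (by linarith)
end

section
/- Let M₁ and M₂ be real symmetric n×n matrices, with eigenvalues of M₁ listed in nonincreasing order λ₁(M₁) ≥ ⋯ ≥ λ_n(M₁) ≥ 0 (so M₁ is positive semidefinite), and eigenvalues of M₂ listed in nonincreasing order λ₁(M₂) ≥ ⋯ ≥ λ_n(M₂). Fix i ∈ {1,…,n} and ϑ > 0, and assume min( λ_{i−1}(M₁) − λ_i(M₁), λ_i(M₁) − λ_{i+1}(M₁) ) ≥ ϑ, with the conventions λ₀(M₁) = +∞ and λ_{n+1}(M₁) = 0. If u, û ∈ ℝⁿ are unit vectors satisfying M₁ u = λ_i(M₁) u, M₂ û = λ_i(M₂) û, and ⟨u, û⟩ ≥ 0, then ‖û − u‖₂ ≤ 2^{3/2} ϑ^{−1} ‖M₁ − M₂‖_op. -/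
/-!
Transport everything to `EuclideanSpace ℝ (Fin n)`, where the `lam`'s become the sorted
eigenvalues of the symmetric operators. Weyl's inequality, proved by the Courant–Fischer
dimension count (the span of the top `i` eigenvectors of one operator meets the span of the
bottom `n - i + 1` eigenvectors of the other), gives `|λᵢ(M₂) - λᵢ(M₁)| ≤ ‖M₁ - M₂‖`, so the
residual `(M₁ - λᵢ(M₁)) û` has norm at most `2 ‖M₁ - M₂‖`. The gap makes `λᵢ(M₁)` simple, so `u`
spans its eigenspace, and expanding `û` in an eigenbasis of `M₁` bounds the residual below by
`ϑ √(1 - ⟨u, û⟩²)`. Finally `‖û - u‖² = 2 - 2 ⟨u, û⟩ ≤ 2 (1 - ⟨u, û⟩²)` as `0 ≤ ⟨u, û⟩ ≤ 1`.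
-/

open Matrix Polynomial Finset

/-- The ℓ2 → ℓ2 operator (spectral) norm of a real square matrix:
`‖A‖_op = sup_{‖x‖₂ = 1} ‖Ax‖₂`. -/
noncomputable def opNorm {n : ℕ} (A : Matrix (Fin n) (Fin n) ℝ) : ℝ :=
  sSup {y : ℝ | ∃ x : Fin n → ℝ, (∑ k, x k ^ 2 = 1) ∧
    y = Real.sqrt (∑ k, (A.mulVec x k) ^ 2)}

open scoped RealInnerProductSpace
open WithLp (toLp ofLp)

lemma norm_sub_sq_le_two_mul_one_sub_inner_sq {E : Type*} [NormedAddCommGroup E]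
    [InnerProductSpace ℝ E] {u w : E} (hu : ‖u‖ = 1) (hw : ‖w‖ = 1) (huw : 0 ≤ ⟪u, w⟫) :
    ‖w - u‖ ^ 2 ≤ 2 * (1 - ⟪u, w⟫ ^ 2) := by
  have hle_one : ⟪u, w⟫ ≤ 1 := by simpa [hu, hw] using real_inner_le_norm u w
  rw [norm_sub_sq_real, hu, hw, real_inner_comm]
  nlinarith

namespace LinearMap.IsSymmetric

variable {E : Type*} [NormedAddCommGroup E] [InnerProductSpace ℝ E] [FiniteDimensional ℝ E]
  {n : ℕ} {T : E →ₗ[ℝ] E} (hT : T.IsSymmetric) (hn : Module.finrank ℝ E = n)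

lemma inner_eigenvectorBasis_apply (x : E) (j : Fin n) :
    ⟪hT.eigenvectorBasis hn j, T x⟫ = hT.eigenvalues hn j * ⟪hT.eigenvectorBasis hn j, x⟫ := by
  simpa [OrthonormalBasis.repr_apply_apply] using hT.eigenvectorBasis_apply_self_apply hn x j

lemma inner_apply_self_eq_sum (x : E) :
    ⟪T x, x⟫ = ∑ j, hT.eigenvalues hn j * ⟪hT.eigenvectorBasis hn j, x⟫ ^ 2 := by
  rw [← (hT.eigenvectorBasis hn).sum_inner_mul_inner]
  refine Finset.sum_congr rfl fun j _ => ?_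
  rw [real_inner_comm, hT.inner_eigenvectorBasis_apply hn]
  ring

lemma norm_apply_sub_smul_sq_eq_sum (x : E) (μ : ℝ) :
    ‖T x - μ • x‖ ^ 2 = ∑ j, ((hT.eigenvalues hn j - μ) * ⟪hT.eigenvectorBasis hn j, x⟫) ^ 2 := by
  rw [← (hT.eigenvectorBasis hn).sum_sq_inner_right]
  refine Finset.sum_congr rfl fun j _ => ?_
  rw [inner_sub_right, real_inner_smul_right, hT.inner_eigenvectorBasis_apply hn]
  ring

lemma inner_eigenvectorBasis_eq_zero_of_mem_span {s : Set (Fin n)} {j : Fin n} (hj : j ∉ s)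
    {x : E} (hx : x ∈ Submodule.span ℝ (hT.eigenvectorBasis hn '' s)) :
    ⟪hT.eigenvectorBasis hn j, x⟫ = 0 := by
  refine Submodule.mem_orthogonal_singleton_iff_inner_right.mp
    (Submodule.span_le.mpr ?_ hx)
  rintro _ ⟨k, hk, rfl⟩
  exact Submodule.mem_orthogonal_singleton_iff_inner_right.mpr
    ((hT.eigenvectorBasis hn).inner_eq_zero fun h => hj (h ▸ hk))

lemma inner_apply_self_le_of_mem_span {s : Set (Fin n)} {μ : ℝ}
    (hμ : ∀ j ∈ s, hT.eigenvalues hn j ≤ μ) {x : E}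
    (hx : x ∈ Submodule.span ℝ (hT.eigenvectorBasis hn '' s)) :
    ⟪T x, x⟫ ≤ μ * ‖x‖ ^ 2 := by
  rw [hT.inner_apply_self_eq_sum hn, ← (hT.eigenvectorBasis hn).sum_sq_inner_right, Finset.mul_sum]
  refine Finset.sum_le_sum fun j _ => ?_
  by_cases hj : j ∈ s
  · exact mul_le_mul_of_nonneg_right (hμ j hj) (sq_nonneg _)
  · simp [hT.inner_eigenvectorBasis_eq_zero_of_mem_span hn hj hx]

lemma le_inner_apply_self_of_mem_span {s : Set (Fin n)} {μ : ℝ}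
    (hμ : ∀ j ∈ s, μ ≤ hT.eigenvalues hn j) {x : E}
    (hx : x ∈ Submodule.span ℝ (hT.eigenvectorBasis hn '' s)) :
    μ * ‖x‖ ^ 2 ≤ ⟪T x, x⟫ := by
  rw [hT.inner_apply_self_eq_sum hn, ← (hT.eigenvectorBasis hn).sum_sq_inner_right, Finset.mul_sum]
  refine Finset.sum_le_sum fun j _ => ?_
  by_cases hj : j ∈ s
  · exact mul_le_mul_of_nonneg_right (hμ j hj) (sq_nonneg _)
  · simp [hT.inner_eigenvectorBasis_eq_zero_of_mem_span hn hj hx]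

lemma finrank_span_eigenvectorBasis_image (s : Finset (Fin n)) :
    Module.finrank ℝ (Submodule.span ℝ (hT.eigenvectorBasis hn '' s)) = s.card := by
  rw [Set.image_eq_range]
  exact (finrank_span_eq_card ((hT.eigenvectorBasis hn).orthonormal.linearIndependent.comp _
    Subtype.val_injective)).trans (Fintype.card_coe s)

lemma eigenvalues_eq_of_charpoly_eq {f : Fin n → ℝ} (hf : Antitone f)
    (h : T.charpoly = ∏ j, (X - C (f j))) : hT.eigenvalues hn = f := by
  rw [← List.ofFn_inj, ← hT.sort_roots_charpoly_eq_eigenvalues, h,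
    Polynomial.roots_prod _ _ (by simp [Finset.prod_ne_zero_iff, X_sub_C_ne_zero])]
  simp only [roots_X_sub_C, Multiset.bind_singleton, Fin.univ_val_map, RCLike.re_to_real,
    Multiset.map_coe, List.map_ofFn, Function.comp_def, Multiset.coe_sort]
  apply List.mergeSort_of_pairwise
  simp_rw [decide_eq_true_eq, ← List.sortedGE_iff_pairwise]
  exact hf.sortedGE_ofFn

variable {S : E →ₗ[ℝ] E} (hS : S.IsSymmetric)

theorem eigenvalues_le_add_of_inner_le {ε : ℝ} (hST : ∀ x, ⟪S x, x⟫ ≤ ⟪T x, x⟫ + ε * ‖x‖ ^ 2)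
    (i : Fin n) : hS.eigenvalues hn i ≤ hT.eigenvalues hn i + ε := by
  set V := Submodule.span ℝ (hS.eigenvectorBasis hn '' ↑(Finset.Iic i))
  set W := Submodule.span ℝ (hT.eigenvectorBasis hn '' ↑(Finset.Ici i))
  have hdim : Module.finrank ℝ E < Module.finrank ℝ V + Module.finrank ℝ W := by
    rw [hS.finrank_span_eigenvectorBasis_image, hT.finrank_span_eigenvectorBasis_image,
      Fin.card_Iic, Fin.card_Ici]
    omega
  obtain ⟨x, hxV, hxW, hx⟩ : ∃ x ∈ V, x ∈ W ∧ x ≠ 0 := by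
    by_contra! h
    exact hdim.not_ge (Submodule.finrank_add_finrank_le_of_disjoint
      (Submodule.disjoint_def.mpr fun x hxV hxW => h x hxV hxW))
  have hS_low := hS.le_inner_apply_self_of_mem_span hn (μ := hS.eigenvalues hn i)
    (fun j hj => hS.eigenvalues_antitone hn (Finset.mem_Iic.mp hj)) hxV
  have hT_up := hT.inner_apply_self_le_of_mem_span hn (μ := hT.eigenvalues hn i)
    (fun j hj => hT.eigenvalues_antitone hn (Finset.mem_Ici.mp hj)) hxW
  have hpos : 0 < ‖x‖ ^ 2 := by positivity
  nlinarith [hST x]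

theorem abs_eigenvalues_sub_le {ε : ℝ} (hTS : ∀ x, ‖T x - S x‖ ≤ ε * ‖x‖) (i : Fin n) :
    |hS.eigenvalues hn i - hT.eigenvalues hn i| ≤ ε := by
  have hquad : ∀ x, |⟪S x, x⟫ - ⟪T x, x⟫| ≤ ε * ‖x‖ ^ 2 := fun x => by
    rw [← inner_sub_left, sq, ← mul_assoc]
    exact (abs_real_inner_le_norm _ _).trans
      (mul_le_mul_of_nonneg_right (norm_sub_rev (S x) _ ▸ hTS x) (norm_nonneg x))
  refine abs_sub_le_iff.mpr ⟨?_, ?_⟩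
  · have := hT.eigenvalues_le_add_of_inner_le hn hS (ε := ε)
      (fun x => by linarith [(abs_le.mp (hquad x)).2]) i
    linarith
  · have := hS.eigenvalues_le_add_of_inner_le hn hT (ε := ε)
      (fun x => by linarith [(abs_le.mp (hquad x)).1]) i
    linarith

lemma inner_eigenvectorBasis_eq_zero_of_apply_eq_smul {u : E} {μ : ℝ} (hu : T u = μ • u)
    {j : Fin n} (hj : hT.eigenvalues hn j ≠ μ) : ⟪hT.eigenvectorBasis hn j, u⟫ = 0 := by
  have h := hT.inner_eigenvectorBasis_apply hn u j
  rw [hu, real_inner_smul_right] at h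
  exact (mul_eq_zero.mp (by linarith : (hT.eigenvalues hn j - μ) * _ = 0)).resolve_left
    (sub_ne_zero.mpr hj)

lemma sq_inner_eq_sq_inner_eigenvectorBasis {j₀ : Fin n}
    (hsimple : ∀ j ≠ j₀, hT.eigenvalues hn j ≠ hT.eigenvalues hn j₀) {u : E} (hu : ‖u‖ = 1)
    (hTu : T u = hT.eigenvalues hn j₀ • u) (w : E) :
    ⟪u, w⟫ ^ 2 = ⟪hT.eigenvectorBasis hn j₀, w⟫ ^ 2 := by
  set b := hT.eigenvectorBasis hn
  have hcoord : ∀ j ≠ j₀, ⟪b j, u⟫ = 0 := fun j hj =>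
    hT.inner_eigenvectorBasis_eq_zero_of_apply_eq_smul hn hTu (hsimple j hj)
  have hu_eq : u = ⟪b j₀, u⟫ • b j₀ :=
    (b.sum_repr' u).symm.trans (Finset.sum_eq_single j₀ (fun j _ hj => by simp [hcoord j hj])
      (by simp))
  have hnorm : ⟪b j₀, u⟫ ^ 2 = 1 := by
    rw [← one_pow 2, ← hu, ← b.sum_sq_inner_right,
      Finset.sum_eq_single j₀ (fun j _ hj => by simp [hcoord j hj]) (by simp)]
  rw [hu_eq, real_inner_smul_left, mul_pow, hnorm, one_mul]

lemma sq_mul_sub_le_norm_apply_sub_smul_sq {j₀ : Fin n} {ϑ : ℝ} (hϑ : 0 ≤ ϑ)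
    (hgap : ∀ j ≠ j₀, ϑ ≤ |hT.eigenvalues hn j - hT.eigenvalues hn j₀|) (w : E) :
    ϑ ^ 2 * (‖w‖ ^ 2 - ⟪hT.eigenvectorBasis hn j₀, w⟫ ^ 2)
      ≤ ‖T w - hT.eigenvalues hn j₀ • w‖ ^ 2 := by
  set b := hT.eigenvectorBasis hn
  set ev := hT.eigenvalues hn
  rw [hT.norm_apply_sub_smul_sq_eq_sum hn, ← b.sum_sq_inner_right,
    ← Finset.add_sum_erase _ _ (Finset.mem_univ j₀), add_sub_cancel_left, Finset.mul_sum]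
  calc ∑ j ∈ Finset.univ.erase j₀, ϑ ^ 2 * ⟪b j, w⟫ ^ 2
      ≤ ∑ j ∈ Finset.univ.erase j₀, ((ev j - ev j₀) * ⟪b j, w⟫) ^ 2 := by
        refine Finset.sum_le_sum fun j hj => ?_
        rw [mul_pow, ← sq_abs (ev j - ev j₀)]
        gcongr
        exact hgap j (Finset.ne_of_mem_erase hj)
    _ ≤ ∑ j, ((ev j - ev j₀) * ⟪b j, w⟫) ^ 2 :=
        Finset.sum_le_sum_of_subset_of_nonneg (Finset.erase_subset _ _)
          fun _ _ _ => sq_nonneg _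

lemma mul_norm_sub_le_of_gap {j₀ : Fin n} {ϑ : ℝ} (hϑ : 0 < ϑ)
    (hgap : ∀ j ≠ j₀, ϑ ≤ |hT.eigenvalues hn j - hT.eigenvalues hn j₀|) {u w : E}
    (hu : ‖u‖ = 1) (hw : ‖w‖ = 1) (hTu : T u = hT.eigenvalues hn j₀ • u) (huw : 0 ≤ ⟪u, w⟫) :
    ϑ * ‖w - u‖ ≤ √2 * ‖T w - hT.eigenvalues hn j₀ • w‖ := by
  have hsimple : ∀ j ≠ j₀, hT.eigenvalues hn j ≠ hT.eigenvalues hn j₀ := fun j hj h => by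
    simpa [h] using (hgap j hj).trans_lt' hϑ
  have hangle := norm_sub_sq_le_two_mul_one_sub_inner_sq hu hw huw
  rw [hT.sq_inner_eq_sq_inner_eigenvectorBasis hn hsimple hu hTu] at hangle
  have hsin := hT.sq_mul_sub_le_norm_apply_sub_smul_sq hn hϑ.le hgap w
  rw [hw, one_pow] at hsin
  refine (pow_le_pow_iff_left₀ (by positivity) (by positivity) two_ne_zero).mp ?_
  rw [mul_pow, mul_pow, Real.sq_sqrt zero_le_two]
  nlinarith [sq_nonneg ϑ]

theorem mul_norm_sub_le_of_gap_of_norm_sub_le {ε : ℝ} (hTS : ∀ x, ‖T x - S x‖ ≤ ε * ‖x‖)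
    {j₀ : Fin n} {ϑ : ℝ} (hϑ : 0 < ϑ)
    (hgap : ∀ j ≠ j₀, ϑ ≤ |hT.eigenvalues hn j - hT.eigenvalues hn j₀|) {u w : E}
    (hu : ‖u‖ = 1) (hw : ‖w‖ = 1) (hTu : T u = hT.eigenvalues hn j₀ • u)
    (hSw : S w = hS.eigenvalues hn j₀ • w) (huw : 0 ≤ ⟪u, w⟫) :
    ϑ * ‖w - u‖ ≤ 2 * √2 * ε := by
  have hres : ‖T w - hT.eigenvalues hn j₀ • w‖ ≤ 2 * ε := calc
    ‖T w - hT.eigenvalues hn j₀ • w‖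
        = ‖(T w - S w) + (hS.eigenvalues hn j₀ - hT.eigenvalues hn j₀) • w‖ := by
          rw [hSw, sub_smul]; abel_nf
    _ ≤ ε * ‖w‖ + |hS.eigenvalues hn j₀ - hT.eigenvalues hn j₀| * ‖w‖ := by
          grw [norm_add_le, norm_smul, hTS w, Real.norm_eq_abs]
    _ ≤ 2 * ε := by
          rw [hw]; linarith [hT.abs_eigenvalues_sub_le hn hS hTS j₀]
  calc ϑ * ‖w - u‖ ≤ √2 * ‖T w - hT.eigenvalues hn j₀ • w‖ :=
        hT.mul_norm_sub_le_of_gap hn hϑ hgap hu hw hTu huw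
    _ ≤ √2 * (2 * ε) := by gcongr
    _ = 2 * √2 * ε := by ring

end LinearMap.IsSymmetric

lemma norm_toLp_eq_sqrt_sum_sq {ι : Type*} [Fintype ι] (x : ι → ℝ) :
    ‖toLp 2 x‖ = √(∑ i, x i ^ 2) := by
  simp [EuclideanSpace.norm_eq]

lemma inner_toLp_eq_sum_mul {ι : Type*} [Fintype ι] (x y : ι → ℝ) :
    ⟪toLp 2 x, toLp 2 y⟫ = ∑ i, x i * y i := by
  simp [EuclideanSpace.inner_toLp_toLp, dotProduct, mul_comm]

lemma norm_toEuclideanLin_apply_le_opNorm {n : ℕ} (A : Matrix (Fin n) (Fin n) ℝ)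
    (x : EuclideanSpace ℝ (Fin n)) : ‖toEuclideanLin A x‖ ≤ opNorm A * ‖x‖ := by
  rcases eq_or_ne x 0 with rfl | hx
  · simp
  have hunit : ∀ y : EuclideanSpace ℝ (Fin n), ‖y‖ = 1 → ‖toEuclideanLin A y‖ ≤ opNorm A := by
    intro y hy
    refine le_csSup ⟨‖LinearMap.toContinuousLinearMap (toEuclideanLin A)‖, ?_⟩
      ⟨ofLp y, ?_, ?_⟩
    · rintro _ ⟨z, hz, rfl⟩
      have hz' : ‖toLp 2 z‖ = 1 := by rw [norm_toLp_eq_sqrt_sum_sq, hz, Real.sqrt_one]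
      simpa [← norm_toLp_eq_sqrt_sum_sq, hz'] using
        (LinearMap.toContinuousLinearMap (toEuclideanLin A)).le_opNorm (toLp 2 z)
    · rw [← Real.sqrt_eq_one, ← norm_toLp_eq_sqrt_sum_sq]
      simpa using hy
    · rw [← norm_toLp_eq_sqrt_sum_sq]
      rfl
  have hx0 : ‖x‖ ≠ 0 := norm_ne_zero_iff.mpr hx
  calc ‖toEuclideanLin A x‖ = ‖x‖ * ‖toEuclideanLin A (‖x‖⁻¹ • x)‖ := by
        rw [map_smul, norm_smul, norm_inv, norm_norm, mul_inv_cancel_left₀ hx0]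
    _ ≤ ‖x‖ * opNorm A := by gcongr; exact hunit _ (norm_smul_inv_norm hx)
    _ = opNorm A * ‖x‖ := mul_comm _ _

lemma prod_Icc_one_eq_prod_fin {M : Type*} [CommMonoid M] (g : ℕ → M) (n : ℕ) :
    ∏ j ∈ Icc 1 n, g j = ∏ j : Fin n, g (j + 1) := by
  rw [Fin.prod_univ_eq_prod_range (fun j => g (j + 1)), Finset.range_eq_Ico,
    Finset.prod_Ico_add' g 0 n 1]
  rfl

lemma Matrix.IsSymm.isSymmetric_toEuclideanLin {n : Type*} [Fintype n] [DecidableEq n]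
    {M : Matrix n n ℝ} (hM : M.IsSymm) : (toEuclideanLin M).IsSymmetric :=
  isSymmetric_toEuclideanLin_iff.mpr (isHermitian_iff_isSymm.mpr hM)

lemma eigenvalues_toEuclideanLin_eq_of_charpoly {n : ℕ} {M : Matrix (Fin n) (Fin n) ℝ}
    (hM : (toEuclideanLin M).IsSymmetric) {lam : ℕ → ℝ}
    (hsort : ∀ j k : ℕ, 1 ≤ j → j ≤ k → k ≤ n → lam k ≤ lam j)
    (hchar : M.charpoly = ∏ j ∈ Icc 1 n, (X - C (lam j))) (j : Fin n) :
    hM.eigenvalues finrank_euclideanSpace_fin j = lam (j + 1) := by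
  refine congrFun (hM.eigenvalues_eq_of_charpoly_eq _ (f := fun j => lam (j + 1))
    (fun a b hab => hsort _ _ (by omega) (by simpa using hab) (by omega)) ?_) j
  rw [toEuclideanLin_eq_toLin_orthonormal, charpoly_toLin, hchar, prod_Icc_one_eq_prod_fin]

lemma le_abs_sub_of_gap {n : ℕ} {lam : ℕ → ℝ}
    (hsort : ∀ j k : ℕ, 1 ≤ j → j ≤ k → k ≤ n → lam k ≤ lam j) {i : ℕ} (hin : i ≤ n) {ϑ : ℝ}
    (hgap_left : 2 ≤ i → ϑ ≤ lam (i - 1) - lam i) (hgap_right : i < n → ϑ ≤ lam i - lam (i + 1))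
    {m : ℕ} (hm1 : 1 ≤ m) (hmn : m ≤ n) (hmi : m ≠ i) : ϑ ≤ |lam m - lam i| := by
  rcases hmi.lt_or_gt with hlt | hgt
  · have := hsort m (i - 1) hm1 (by omega) (by omega)
    calc ϑ ≤ lam m - lam i := by linarith [hgap_left (by omega)]
      _ ≤ |lam m - lam i| := le_abs_self _
  · have := hsort (i + 1) m (by omega) hgt hmn
    calc ϑ ≤ lam i - lam m := by linarith [hgap_right (by omega)]
      _ ≤ |lam m - lam i| := (le_abs_self _).trans_eq (abs_sub_comm _ _)

theorem davis_kahan_variant_general (n : ℕ) (M₁ M₂ : Matrix (Fin n) (Fin n) ℝ)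
    (hM₁ : M₁.IsSymm) (hM₂ : M₂.IsSymm)
    (lam₁ lam₂ : ℕ → ℝ)
    (hsort₁ : ∀ j k : ℕ, 1 ≤ j → j ≤ k → k ≤ n → lam₁ k ≤ lam₁ j)
    (hsort₂ : ∀ j k : ℕ, 1 ≤ j → j ≤ k → k ≤ n → lam₂ k ≤ lam₂ j)
    (hchar₁ : M₁.charpoly = ∏ j ∈ Finset.Icc 1 n, (X - C (lam₁ j)))
    (hchar₂ : M₂.charpoly = ∏ j ∈ Finset.Icc 1 n, (X - C (lam₂ j)))
    (i : ℕ) (hi1 : 1 ≤ i) (hin : i ≤ n)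
    (ϑ : ℝ) (hϑ : 0 < ϑ)
    (hgap_left : 2 ≤ i → ϑ ≤ lam₁ (i - 1) - lam₁ i)
    (hgap_right : i < n → ϑ ≤ lam₁ i - lam₁ (i + 1))
    (u uhat : Fin n → ℝ)
    (hu : ∑ k, u k ^ 2 = 1) (huhat : ∑ k, uhat k ^ 2 = 1)
    (heig₁ : M₁.mulVec u = lam₁ i • u)
    (heig₂ : M₂.mulVec uhat = lam₂ i • uhat)
    (hinner : 0 ≤ ∑ k, u k * uhat k) :
    Real.sqrt (∑ k, (uhat k - u k) ^ 2)
      ≤ 2 ^ ((3 : ℝ) / 2) * ϑ⁻¹ * opNorm (M₁ - M₂) := by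
  have hT₁ := hM₁.isSymmetric_toEuclideanLin
  have hT₂ := hM₂.isSymmetric_toEuclideanLin
  have hev₁ := eigenvalues_toEuclideanLin_eq_of_charpoly hT₁ hsort₁ hchar₁
  have hev₂ := eigenvalues_toEuclideanLin_eq_of_charpoly hT₂ hsort₂ hchar₂
  obtain ⟨i₀, rfl⟩ : ∃ i₀ : Fin n, i = i₀ + 1 := ⟨⟨i - 1, by omega⟩, by simp; omega⟩
  have hgap : ∀ j ≠ i₀, ϑ ≤ |hT₁.eigenvalues _ j - hT₁.eigenvalues _ i₀| := fun j hj => by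
    rw [hev₁, hev₁]
    exact le_abs_sub_of_gap hsort₁ hin hgap_left hgap_right (by omega) (by omega)
      (by simpa [Fin.ext_iff] using hj)
  have hunit : ∀ x : Fin n → ℝ, ∑ k, x k ^ 2 = 1 → ‖toLp 2 x‖ = 1 := fun x hx => by
    rw [norm_toLp_eq_sqrt_sum_sq, hx, Real.sqrt_one]
  have key := hT₁.mul_norm_sub_le_of_gap_of_norm_sub_le _ hT₂ (ε := opNorm (M₁ - M₂))
    (fun x => by simpa using norm_toEuclideanLin_apply_le_opNorm (M₁ - M₂) x) hϑ hgap
    (hunit u hu) (hunit uhat huhat)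
    (by rw [hev₁, toLpLin_toLp, toLin'_apply, heig₁, WithLp.toLp_smul])
    (by rw [hev₂, toLpLin_toLp, toLin'_apply, heig₂, WithLp.toLp_smul])
    (by rwa [inner_toLp_eq_sum_mul])
  rw [← WithLp.toLp_sub, norm_toLp_eq_sqrt_sum_sq] at key
  have h32 : (2 : ℝ) ^ ((3 : ℝ) / 2) = 2 * √2 := by
    rw [show (3 : ℝ) / 2 = 1 + 1 / 2 by norm_num, Real.rpow_add zero_lt_two, Real.rpow_one,
      ← Real.sqrt_eq_rpow]
  rw [h32, mul_right_comm, ← div_eq_mul_inv, le_div_iff₀ hϑ, mul_comm]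
  exact key

/-- A variant of the Davis–Kahan theorem. `M₁` and `M₂` are real symmetric `n × n`
matrices; `lam₁ j` (resp. `lam₂ j`), for `1 ≤ j ≤ n`, are their eigenvalues listed in
nonincreasing order (encoded via the characteristic polynomial), with `M₁` positive
semidefinite. If the `i`-th eigenvalue of `M₁` is separated from its neighbours by
`ϑ > 0` (with the conventions `λ₀ = ∞`, `λ_{n+1} = 0`), and `u`, `û` are unit
eigenvectors of `M₁` and `M₂` for their respective `i`-th eigenvalues with `⟨u, û⟩ ≥ 0`,
then `‖û − u‖₂ ≤ 2^{3/2} ϑ⁻¹ ‖M₁ − M₂‖_op`. -/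
theorem davis_kahan_variant (n : ℕ) (M₁ M₂ : Matrix (Fin n) (Fin n) ℝ)
    (hM₁ : M₁.IsSymm) (hM₂ : M₂.IsSymm)
    (lam₁ lam₂ : ℕ → ℝ)
    (hsort₁ : ∀ j k : ℕ, 1 ≤ j → j ≤ k → k ≤ n → lam₁ k ≤ lam₁ j)
    (hsort₂ : ∀ j k : ℕ, 1 ≤ j → j ≤ k → k ≤ n → lam₂ k ≤ lam₂ j)
    (hpsd : 0 ≤ lam₁ n)
    (hchar₁ : M₁.charpoly = ∏ j ∈ Finset.Icc 1 n, (X - C (lam₁ j)))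
    (hchar₂ : M₂.charpoly = ∏ j ∈ Finset.Icc 1 n, (X - C (lam₂ j)))
    (i : ℕ) (hi1 : 1 ≤ i) (hin : i ≤ n)
    (ϑ : ℝ) (hϑ : 0 < ϑ)
    (hgap_left : 2 ≤ i → ϑ ≤ lam₁ (i - 1) - lam₁ i)
    (hgap_right : i < n → ϑ ≤ lam₁ i - lam₁ (i + 1))
    (hgap_last : i = n → ϑ ≤ lam₁ n)
    (u uhat : Fin n → ℝ)
    (hu : ∑ k, u k ^ 2 = 1) (huhat : ∑ k, uhat k ^ 2 = 1)
    (heig₁ : M₁.mulVec u = lam₁ i • u)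
    (heig₂ : M₂.mulVec uhat = lam₂ i • uhat)
    (hinner : 0 ≤ ∑ k, u k * uhat k) :
    Real.sqrt (∑ k, (uhat k - u k) ^ 2)
      ≤ 2 ^ ((3 : ℝ) / 2) * ϑ⁻¹ * opNorm (M₁ - M₂) :=
  davis_kahan_variant_general n M₁ M₂ hM₁ hM₂ lam₁ lam₂ hsort₁ hsort₂ hchar₁ hchar₂ i hi1 hin ϑ hϑ
    hgap_left hgap_right u uhat hu huhat heig₁ heig₂ hinner
end

section
/- Assume ‖∇L(Θ*)‖_{∞,∞} ≤ λ/2, that |S_j| ≤ s for every 1 ≤ j ≤ d, and let Θ̂ be a global minimizer over ℝ^{m×d} of Θ ↦ L(Θ) + λ‖Θ‖_{1,1}. Then L(Θ̂) − L(Θ*) ≤ 4 √(s d) · λ · ‖Θ̂ − Θ*‖_F. -/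
open Matrix Finset

/-- Loss excess bound: under `‖∇L(Θ*)‖_{∞,∞} ≤ λ/2` and column supports of size at most
`s`, every global minimizer `Θ̂` of `Θ ↦ L(Θ) + λ‖Θ‖_{1,1}` satisfies
`L(Θ̂) − L(Θ*) ≤ 4 √(sd) λ ‖Θ̂ − Θ*‖_F`. -/
theorem loss_excess_bound (T m d s : ℕ) (hT : 0 < T) (hm : 0 < m) (hd : 0 < d)
    (hs : 0 < s)
    (Y : Matrix (Fin T) (Fin d) ℝ) (X : Matrix (Fin T) (Fin m) ℝ)
    (lam : ℝ) (hlam : 0 < lam)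
    (Θstar Θhat : Matrix (Fin m) (Fin d) ℝ)
    (hgrad : ∀ (i : Fin m) (j : Fin d),
      |((1 / (T : ℝ)) • (Xᵀ * (X * Θstar - Y))) i j| ≤ lam / 2)
    (hsupp : ∀ j : Fin d,
      (Finset.univ.filter (fun i : Fin m => Θstar i j ≠ 0)).card ≤ s)
    (hmin : ∀ Θ : Matrix (Fin m) (Fin d) ℝ,
      (1 / (2 * (T : ℝ))) * (∑ t, ∑ j, (Y t j - (X * Θhat) t j) ^ 2)
          + lam * ∑ i, ∑ j, |Θhat i j|
        ≤ (1 / (2 * (T : ℝ))) * (∑ t, ∑ j, (Y t j - (X * Θ) t j) ^ 2)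
          + lam * ∑ i, ∑ j, |Θ i j|) :
    (1 / (2 * (T : ℝ))) * (∑ t, ∑ j, (Y t j - (X * Θhat) t j) ^ 2)
        - (1 / (2 * (T : ℝ))) * (∑ t, ∑ j, (Y t j - (X * Θstar) t j) ^ 2)
      ≤ 4 * Real.sqrt ((s : ℝ) * d) * lam
          * Real.sqrt (∑ i, ∑ j, (Θhat i j - Θstar i j) ^ 2) := by
  classical
  set Δ : Matrix (Fin m) (Fin d) ℝ := fun i j => Θhat i j - Θstar i j with hΔ
  set S : Finset (Fin m × Fin d) :=
    Finset.univ.filter (fun p => Θstar p.1 p.2 ≠ 0) with hS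
  -- step 1: minimality
  have h1 : (1 / (2 * (T : ℝ))) * (∑ t, ∑ j, (Y t j - (X * Θhat) t j) ^ 2)
        - (1 / (2 * (T : ℝ))) * (∑ t, ∑ j, (Y t j - (X * Θstar) t j) ^ 2)
      ≤ lam * ((∑ i, ∑ j, |Θstar i j|) - (∑ i, ∑ j, |Θhat i j|)) := by
    have := hmin Θstar
    rw [mul_sub]
    linarith
  -- step 2: pointwise bound on ℓ1 difference
  have h2 : (∑ i, ∑ j, |Θstar i j|) - (∑ i, ∑ j, |Θhat i j|)
      ≤ ∑ p ∈ S, |Δ p.1 p.2| := by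
    have heq : ∑ p ∈ S, |Δ p.1 p.2|
        = ∑ i, ∑ j, (if Θstar i j ≠ 0 then |Δ i j| else 0) := by
      rw [hS, Finset.sum_filter, Fintype.sum_prod_type]
    rw [heq, ← Finset.sum_sub_distrib]
    refine Finset.sum_le_sum fun i _ => ?_
    rw [← Finset.sum_sub_distrib]
    refine Finset.sum_le_sum fun j _ => ?_
    by_cases h : Θstar i j = 0
    · rw [if_neg (not_not_intro h), h, abs_zero, zero_sub]
      simpa using abs_nonneg (Θhat i j)
    · rw [if_pos h]
      calc |Θstar i j| - |Θhat i j| ≤ |Θstar i j - Θhat i j| := abs_sub_abs_le_abs_sub _ _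
        _ = |Δ i j| := by simp [hΔ, abs_sub_comm]
  -- step 3: card bound
  have hcardn : S.card ≤ s * d := by
    have hce : S.card = ∑ j : Fin d,
        (Finset.univ.filter (fun i : Fin m => Θstar i j ≠ 0)).card := by
      rw [hS, Finset.card_filter, Fintype.sum_prod_type, Finset.sum_comm]
      exact Finset.sum_congr rfl fun j _ => (Finset.card_filter _ _).symm
    rw [hce]
    calc ∑ j : Fin d, (Finset.univ.filter (fun i : Fin m => Θstar i j ≠ 0)).card
        ≤ ∑ _j : Fin d, s := Finset.sum_le_sum fun j _ => hsupp j
      _ = s * d := by simp [mul_comm]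
  have hcard : (S.card : ℝ) ≤ (s : ℝ) * d := by
    calc (S.card : ℝ) ≤ ((s * d : ℕ) : ℝ) := by exact_mod_cast hcardn
      _ = (s : ℝ) * d := by push_cast; ring
  -- step 4: Cauchy-Schwarz
  have hsq : (∑ p ∈ S, |Δ p.1 p.2|) ^ 2
      ≤ (S.card : ℝ) * ∑ p ∈ S, |Δ p.1 p.2| ^ 2 :=
    sq_sum_le_card_mul_sum_sq
  have hsub : ∑ p ∈ S, |Δ p.1 p.2| ^ 2 ≤ ∑ i, ∑ j, (Θhat i j - Θstar i j) ^ 2 := by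
    calc ∑ p ∈ S, |Δ p.1 p.2| ^ 2 ≤ ∑ p : Fin m × Fin d, |Δ p.1 p.2| ^ 2 :=
        Finset.sum_le_sum_of_subset_of_nonneg (Finset.subset_univ _)
          (fun p _ _ => by positivity)
      _ = ∑ i, ∑ j, (Θhat i j - Θstar i j) ^ 2 := by
        rw [Fintype.sum_prod_type]
        exact Finset.sum_congr rfl fun i _ => Finset.sum_congr rfl fun j _ => by
          simp [sq_abs, hΔ]
  have htot : (0:ℝ) ≤ ∑ i, ∑ j, (Θhat i j - Θstar i j) ^ 2 := by positivity
  have h4 : ∑ p ∈ S, |Δ p.1 p.2|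
      ≤ Real.sqrt ((s : ℝ) * d) * Real.sqrt (∑ i, ∑ j, (Θhat i j - Θstar i j) ^ 2) := by
    rw [← Real.sqrt_mul (by positivity)]
    rw [show (∑ p ∈ S, |Δ p.1 p.2|) = Real.sqrt ((∑ p ∈ S, |Δ p.1 p.2|)^2) from
      (Real.sqrt_sq (by positivity)).symm]
    apply Real.sqrt_le_sqrt
    calc (∑ p ∈ S, |Δ p.1 p.2|)^2 ≤ (S.card : ℝ) * ∑ p ∈ S, |Δ p.1 p.2| ^ 2 := hsq
      _ ≤ (s : ℝ) * d * (∑ i, ∑ j, (Θhat i j - Θstar i j) ^ 2) := by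
          apply mul_le_mul hcard hsub (by positivity) (by positivity)
  -- combine
  have hsqrt1 : (0:ℝ) ≤ Real.sqrt ((s : ℝ) * d) := Real.sqrt_nonneg _
  have hsqrt2 : (0:ℝ) ≤ Real.sqrt (∑ i, ∑ j, (Θhat i j - Θstar i j) ^ 2) := Real.sqrt_nonneg _
  calc (1 / (2 * (T : ℝ))) * (∑ t, ∑ j, (Y t j - (X * Θhat) t j) ^ 2)
        - (1 / (2 * (T : ℝ))) * (∑ t, ∑ j, (Y t j - (X * Θstar) t j) ^ 2)
      ≤ lam * ((∑ i, ∑ j, |Θstar i j|) - (∑ i, ∑ j, |Θhat i j|)) := h1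
    _ ≤ lam * (∑ p ∈ S, |Δ p.1 p.2|) := by
        exact mul_le_mul_of_nonneg_left h2 hlam.le
    _ ≤ lam * (Real.sqrt ((s : ℝ) * d) * Real.sqrt (∑ i, ∑ j, (Θhat i j - Θstar i j) ^ 2)) :=
        mul_le_mul_of_nonneg_left h4 hlam.le
    _ ≤ 4 * Real.sqrt ((s : ℝ) * d) * lam * Real.sqrt (∑ i, ∑ j, (Θhat i j - Θstar i j) ^ 2) := by
        nlinarith [mul_nonneg hsqrt1 hsqrt2]
end
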